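/- arXiv:1912.03674 — 3 statements merged into one kernel-verified Lean document; each statement's English description precedes it below -/
import Mathlib

section
/- For every integer n ≥ 1 and all nonnegative integers a, b, c, the number of inversion sequences e of length n avoiding both patterns 010 and 101 with dist(e) = a, satu(e) = b and zero(e) = c equals the number of inversion sequences e of length n avoiding both patterns 010 and 100 with dist(e) = a, satu(e) = b and zero(e) = c. Consequently, for 1 ≤ k ≤ n, the number of e in I_n(010,100) with rep(e) = k equals the Stirling number of the second kind S(n,k). -/
/-- An inversion sequence of length `n` (0-indexed): `e i ≤ i` for all `i`. -/
def InvSeq {n : ℕ} (e : Fin n → ℕ) : Prop := ∀ i : Fin n, e i ≤ (i : ℕ)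

/-- `e` contains the pattern `p` (a word of nonnegative integers): there is a
strictly increasing choice of positions on which `e` is order-isomorphic to `p`. -/
def Contains {n : ℕ} (e : Fin n → ℕ) (p : List ℕ) : Prop :=
  ∃ s : Fin p.length → Fin n, StrictMono s ∧
    ∀ a b : Fin p.length,
      (p.get a < p.get b ↔ e (s a) < e (s b)) ∧
      (p.get a = p.get b ↔ e (s a) = e (s b))

/-- `e` avoids the pattern `p`. -/
def Avoids {n : ℕ} (e : Fin n → ℕ) (p : List ℕ) : Prop := ¬ Contains e p

/-- The number of zero entries of `e`. -/
def zeroStat {n : ℕ} (e : Fin n → ℕ) : ℕ :=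
  (Finset.univ.filter (fun i : Fin n => e i = 0)).card

/-- The number of distinct positive values among the entries of `e`. -/
def distStat {n : ℕ} (e : Fin n → ℕ) : ℕ :=
  ((Finset.univ.image e).filter (fun v => 0 < v)).card

/-- The number of repeated entries of `e`: `n - dist e`. -/
def repStat {n : ℕ} (e : Fin n → ℕ) : ℕ := n - distStat e

/-- The number of saturated entries of `e` (1-indexed: `e_i = i - 1`). -/
def satuStat {n : ℕ} (e : Fin n → ℕ) : ℕ :=
  (Finset.univ.filter (fun i : Fin n => e i = (i : ℕ))).card

/-- The Stirling number of the second kind: the number of partitions of an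
`n`-element set into exactly `k` nonempty blocks. -/
noncomputable def stirling2 (n k : ℕ) : ℕ :=
  Nat.card {P : Finpartition (Finset.univ : Finset (Fin n)) // P.parts.card = k}

/-!
An inversion sequence avoiding 010 and 101 is constant between consecutive first occurrences
of values, and one avoiding 010 and 100 takes its running maximum at every repeated entry. In
both classes a sequence is therefore determined by its first occurrences, recorded as the
partial map `i ↦ e i` on first-occurrence positions (a marking), and in both classes every
marking occurs whose values are distinct, positive away from position `0`, and at most their
position. The statistics dist, satu and zero can be read off the marking, which gives the
equidistribution.

Markings are in bijection with set partitions of `{0, …, n - 1}`: a position marked with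
`v < i` follows `v` in its block, a saturated position joins the block of `0`, and an unmarked
position opens a new block. So the number of blocks is one more than the number of unmarked
positions, which is `rep`.
-/

section SetoidKer

variable {α β : Type*} [Fintype α] [DecidableEq α] [DecidableEq β]

instance (f : α → β) : DecidableRel (Setoid.ker f) := fun a b => decEq (f a) (f b)

lemma Finpartition.mem_part_ofSetoid_ker {f : α → β} {a b : α} :
    b ∈ (ofSetoid (Setoid.ker f)).part a ↔ f a = f b :=
  mem_part_ofSetoid_iff_rel.trans Setoid.ker_def

lemma Finpartition.card_parts_ofSetoid_ker (f : α → β) :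
    (ofSetoid (Setoid.ker f)).parts.card = (Finset.univ.image f).card := by
  have hparts : (ofSetoid (Setoid.ker f)).parts =
      (Finset.univ.image f).image fun y => Finset.univ.filter (y = f ·) := by
    simp only [ofSetoid, ofSetSetoid_parts, Finset.image_image]
    rfl
  rw [hparts, Finset.card_image_of_injOn]
  intro y hy _ _ h
  obtain ⟨a, -, rfl⟩ := Finset.mem_image.1 hy
  have ha : a ∈ Finset.univ.filter (f a = f ·) := by simp
  simp only at h
  rw [h] at ha
  exact (Finset.mem_filter.1 ha).2.symm

lemma Finpartition.ofSetoid_ker_eq {P : Finpartition (Finset.univ : Finset α)} {f : α → β}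
    (h : ∀ a b, f a = f b ↔ b ∈ P.part a) : ofSetoid (Setoid.ker f) = P := by
  refine Finpartition.ext (Finset.ext fun t => ?_)
  simp only [ofSetoid, ofSetSetoid_parts, Finset.mem_image, Finset.mem_univ, true_and]
  have hpart (a : α) : Finset.univ.filter (Setoid.ker f a ·) = P.part a := by
    ext b; simp [Setoid.ker_def, h]
  simp only [hpart]
  refine ⟨fun ⟨a, ha⟩ => ha ▸ P.part_mem.2 (Finset.mem_univ a), fun ht => ?_⟩
  obtain ⟨a, -, ha⟩ := P.part_surjOn ht
  exact ⟨a, ha⟩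

end SetoidKer

lemma Nat.card_and_eq_of_equiv {α β γ : Type*} {p : α → Prop} {s : α → γ} {t : β → γ}
    (Φ : {x // p x} ≃ β) (h : ∀ x, t (Φ x) = s x) (c : γ) :
    Nat.card {x // p x ∧ s x = c} = Nat.card {y // t y = c} :=
  Nat.card_congr <| (Equiv.subtypeSubtypeEquivSubtypeInter p (s · = c)).symm.trans <|
    Φ.subtypeEquiv fun x => by rw [h]

namespace InversionSequence

variable {n : ℕ}

lemma exists_strictMono_fin_three_iff {P : (Fin 3 → Fin n) → Prop} :
    (∃ s : Fin 3 → Fin n, StrictMono s ∧ P s) ↔ ∃ i j k, i < j ∧ j < k ∧ P ![i, j, k] := by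
  constructor
  · rintro ⟨s, hs, h⟩
    have hs3 : ![s 0, s 1, s 2] = s := by ext a; fin_cases a <;> rfl
    exact ⟨s 0, s 1, s 2, hs (by decide), hs (by decide), hs3 ▸ h⟩
  · rintro ⟨i, j, k, hij, hjk, h⟩
    refine ⟨_, Fin.strictMono_iff_lt_succ.2 ?_, h⟩
    simp [Fin.forall_fin_succ, hij, hjk]

lemma contains_010_iff {e : Fin n → ℕ} :
    Contains e [0, 1, 0] ↔ ∃ i j k, i < j ∧ j < k ∧ e i < e j ∧ e k = e i := by
  refine exists_strictMono_fin_three_iff.trans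
    (exists₃_congr fun i j k => and_congr_right fun _ => and_congr_right fun _ => ?_)
  simp [Fin.forall_fin_succ]
  omega

lemma contains_101_iff {e : Fin n → ℕ} :
    Contains e [1, 0, 1] ↔ ∃ i j k, i < j ∧ j < k ∧ e j < e i ∧ e k = e i := by
  refine exists_strictMono_fin_three_iff.trans
    (exists₃_congr fun i j k => and_congr_right fun _ => and_congr_right fun _ => ?_)
  simp [Fin.forall_fin_succ]
  omega

lemma contains_100_iff {e : Fin n → ℕ} :
    Contains e [1, 0, 0] ↔ ∃ i j k, i < j ∧ j < k ∧ e j < e i ∧ e k = e j := by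
  refine exists_strictMono_fin_three_iff.trans
    (exists₃_congr fun i j k => and_congr_right fun _ => and_congr_right fun _ => ?_)
  simp [Fin.forall_fin_succ]
  omega

def ContiguousValues (e : Fin n → ℕ) : Prop :=
  ∀ i j k, i < j → j < k → e k = e i → e j = e i

def RepeatsAreMaxima (e : Fin n → ℕ) : Prop :=
  ∀ j k, j < k → e k = e j → ∀ i < k, e i ≤ e k

lemma avoids_010_and_101_iff {e : Fin n → ℕ} :
    Avoids e [0, 1, 0] ∧ Avoids e [1, 0, 1] ↔ ContiguousValues e := by
  simp only [Avoids, contains_010_iff, contains_101_iff, not_exists, not_and]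
  constructor
  · rintro ⟨h010, h101⟩ i j k hij hjk hki
    rcases lt_trichotomy (e j) (e i) with h | h | h
    · exact absurd hki (h101 i j k hij hjk h)
    · exact h
    · exact absurd hki (h010 i j k hij hjk h)
  · intro h
    constructor <;> intro i j k hij hjk hlt hki <;> have := h i j k hij hjk hki <;> omega

lemma avoids_010_and_100_iff {e : Fin n → ℕ} :
    Avoids e [0, 1, 0] ∧ Avoids e [1, 0, 0] ↔ RepeatsAreMaxima e := by
  simp only [Avoids, contains_010_iff, contains_100_iff, not_exists, not_and]
  constructor
  · rintro ⟨h010, h100⟩ j k hjk hkj i hik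
    by_contra! hlt
    rcases lt_trichotomy i j with hij | rfl | hji
    · exact h100 i j k hij hjk (by omega) hkj
    · omega
    · exact h010 j i k hji hik (by omega) hkj
  · intro h
    constructor
    · intro i j k hij hjk hlt hki
      have := h i k (hij.trans hjk) hki j hjk
      omega
    · intro i j k hij hjk hlt hkj
      have := h j k hjk hkj i (hij.trans hjk)
      omega

def IsFirstOcc (e : Fin n → ℕ) (i : Fin n) : Prop := ∀ j < i, e j ≠ e i

instance (e : Fin n → ℕ) : DecidablePred (IsFirstOcc e) := fun _ => by
  unfold IsFirstOcc; infer_instance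

def firstOcc (e : Fin n → ℕ) (i : Fin n) : Option ℕ := if IsFirstOcc e i then some (e i) else none

lemma firstOcc_eq_some_iff {e : Fin n → ℕ} {i : Fin n} {v : ℕ} :
    firstOcc e i = some v ↔ IsFirstOcc e i ∧ e i = v := by
  unfold firstOcc; split_ifs <;> simp [*]

lemma firstOcc_eq_none_iff {e : Fin n → ℕ} {i : Fin n} :
    firstOcc e i = none ↔ ¬ IsFirstOcc e i := by
  unfold firstOcc; split_ifs <;> simp [*]

lemma IsFirstOcc.eq_of_eq {e : Fin n → ℕ} {i j : Fin n} (hi : IsFirstOcc e i)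
    (hj : IsFirstOcc e j) (hij : e i = e j) : i = j := by
  rcases lt_trichotomy i j with h | h | h
  · exact absurd hij (hj i h)
  · exact h
  · exact absurd hij.symm (hi j h)

lemma exists_isFirstOcc_le (e : Fin n → ℕ) (i : Fin n) : ∃ j ≤ i, IsFirstOcc e j ∧ e j = e i := by
  have hne : (Finset.univ.filter (e · = e i)).Nonempty := ⟨i, by simp⟩
  obtain ⟨-, hj⟩ := Finset.mem_filter.1 (Finset.min'_mem _ hne)
  refine ⟨_, Finset.min'_le _ _ (by simp), fun k hk hkj => ?_, hj⟩
  exact absurd hk (not_lt.2 (Finset.min'_le _ _ (by simp [hkj, hj])))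

structure IsMarking (g : Fin n → Option ℕ) : Prop where
  le_of_eq_some : ∀ i v, g i = some v → v ≤ i
  eq_zero_iff : ∀ i v, g i = some v → (v = 0 ↔ (i : ℕ) = 0)
  injective : ∀ i j v, g i = some v → g j = some v → i = j
  eq_some_zero : ∀ i : Fin n, (i : ℕ) = 0 → g i = some 0

lemma isMarking_firstOcc {e : Fin n → ℕ} (he : InvSeq e) : IsMarking (firstOcc e) where
  le_of_eq_some i v h := by
    obtain ⟨-, rfl⟩ := firstOcc_eq_some_iff.1 h
    exact he i
  eq_zero_iff i v h := by
    obtain ⟨hi, rfl⟩ := firstOcc_eq_some_iff.1 h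
    refine ⟨fun h0 => ?_, fun h0 => by simpa [h0] using he i⟩
    by_contra hi0
    exact hi ⟨0, i.pos⟩ (Fin.lt_def.2 (Nat.pos_of_ne_zero hi0)) (by simpa [h0] using he ⟨0, i.pos⟩)
  injective i j v hi hj := by
    obtain ⟨hfi, rfl⟩ := firstOcc_eq_some_iff.1 hi
    obtain ⟨hfj, hji⟩ := firstOcc_eq_some_iff.1 hj
    exact hfi.eq_of_eq hfj hji.symm
  eq_some_zero i h0 := by
    refine firstOcc_eq_some_iff.2 ⟨fun j hj => absurd hj (by simp [Fin.lt_def, h0]), ?_⟩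
    simpa [h0] using he i

structure IsFilling (g : Fin n → Option ℕ) (e : Fin n → ℕ) : Prop where
  eq_of_eq_some : ∀ i v, g i = some v → e i = v
  exists_le_eq_some : ∀ i, ∃ j ≤ i, g j = some (e i)

namespace IsFilling

variable {g : Fin n → Option ℕ} {e : Fin n → ℕ}

lemma invSeq (hg : IsMarking g) (he : IsFilling g e) : InvSeq e := fun i => by
  obtain ⟨j, hji, hj⟩ := he.exists_le_eq_some i
  exact (hg.le_of_eq_some j _ hj).trans hji

lemma firstOcc_eq (hg : IsMarking g) (he : IsFilling g e) : firstOcc e = g := by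
  funext i
  cases hgi : g i with
  | some v =>
    refine firstOcc_eq_some_iff.2 ⟨fun j hji hej => ?_, he.eq_of_eq_some i v hgi⟩
    obtain ⟨k, hkj, hk⟩ := he.exists_le_eq_some j
    rw [hej, he.eq_of_eq_some i v hgi] at hk
    exact absurd (hg.injective k i v hk hgi) (hkj.trans_lt hji).ne
  | none =>
    refine firstOcc_eq_none_iff.2 fun hfirst => ?_
    obtain ⟨j, hji, hj⟩ := he.exists_le_eq_some i
    have hlt : j < i := lt_of_le_of_ne hji (by rintro rfl; simp [hgi] at hj)
    exact hfirst j hlt (he.eq_of_eq_some j _ hj)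

end IsFilling

section Fillings

variable {g : Fin n → Option ℕ}

def lastMarked (g : Fin n → Option ℕ) (i : Fin n) : Fin n :=
  if h : ((Finset.Iic i).filter fun j => (g j).isSome).Nonempty then
    ((Finset.Iic i).filter fun j => (g j).isSome).max' h
  else i

lemma le_lastMarked {i j : Fin n} (hj : (g j).isSome) (hji : j ≤ i) : j ≤ lastMarked g i := by
  have hmem : j ∈ (Finset.Iic i).filter fun j => (g j).isSome := by simp [hj, hji]
  rw [lastMarked, dif_pos ⟨j, hmem⟩]
  exact Finset.le_max' _ _ hmem

lemma lastMarked_spec (hg : IsMarking g) (i : Fin n) :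
    (g (lastMarked g i)).isSome ∧ lastMarked g i ≤ i := by
  have hmem : (⟨0, i.pos⟩ : Fin n) ∈ (Finset.Iic i).filter fun j => (g j).isSome := by
    simp [hg.eq_some_zero, Fin.le_def]
  rw [lastMarked, dif_pos ⟨_, hmem⟩]
  simpa [and_comm] using Finset.max'_mem _ ⟨_, hmem⟩

lemma lastMarked_mono (hg : IsMarking g) : Monotone (lastMarked g) := fun _ _ hij =>
  le_lastMarked (lastMarked_spec hg _).1 ((lastMarked_spec hg _).2.trans hij)

lemma lastMarked_of_isSome (hg : IsMarking g) {i : Fin n} (hi : (g i).isSome) :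
    lastMarked g i = i :=
  le_antisymm (lastMarked_spec hg i).2 (le_lastMarked hi le_rfl)

def fillRuns (g : Fin n → Option ℕ) (i : Fin n) : ℕ := (g (lastMarked g i)).getD 0

lemma isFilling_fillRuns (hg : IsMarking g) : IsFilling g (fillRuns g) where
  eq_of_eq_some i v h := by simp [fillRuns, lastMarked_of_isSome hg (by simp [h] : (g i).isSome), h]
  exists_le_eq_some i := by
    refine ⟨lastMarked g i, (lastMarked_spec hg i).2, ?_⟩
    obtain ⟨v, hv⟩ := Option.isSome_iff_exists.1 (lastMarked_spec hg i).1
    simp [fillRuns, hv]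

lemma contiguousValues_fillRuns (hg : IsMarking g) : ContiguousValues (fillRuns g) := by
  intro i j k hij hjk hki
  obtain ⟨v, hv⟩ := Option.isSome_iff_exists.1 (lastMarked_spec hg i).1
  obtain ⟨w, hw⟩ := Option.isSome_iff_exists.1 (lastMarked_spec hg k).1
  have hvw : w = v := by simpa [fillRuns, hv, hw] using hki
  have hik : lastMarked g k = lastMarked g i := hg.injective _ _ v (hvw ▸ hw) hv
  have hj : lastMarked g j = lastMarked g i :=
    le_antisymm (hik ▸ lastMarked_mono hg hjk.le) (lastMarked_mono hg hij.le)
  simp [fillRuns, hj]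

lemma ContiguousValues.fillRuns_firstOcc {e : Fin n → ℕ} (hs : InvSeq e)
    (hc : ContiguousValues e) : fillRuns (firstOcc e) = e := by
  funext i
  set m := lastMarked (firstOcc e) i
  obtain ⟨hm, hmi⟩ := lastMarked_spec (isMarking_firstOcc hs) i
  obtain ⟨v, hv⟩ := Option.isSome_iff_exists.1 hm
  obtain ⟨-, rfl⟩ := firstOcc_eq_some_iff.1 hv
  obtain ⟨f, hfi, hf, hfe⟩ := exists_isFirstOcc_le e i
  have hfm : f ≤ m := le_lastMarked (by simp [firstOcc, hf]) hfi
  show (firstOcc e m).getD 0 = e i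
  rw [hv, Option.getD_some]
  rcases hfm.lt_or_eq with hfm | rfl
  · rcases hmi.lt_or_eq with hmi | hmi
    · rw [hc f m i hfm hmi hfe.symm, hfe]
    · rw [hmi]
  · exact hfe

def fillMax (g : Fin n → Option ℕ) (i : Fin n) : ℕ :=
  (g i).getD ((Finset.Iio i).sup fun j => (g j).getD 0)

lemma isFilling_fillMax (hg : IsMarking g) : IsFilling g (fillMax g) where
  eq_of_eq_some i v h := by simp [fillMax, h]
  exists_le_eq_some i := by
    cases hgi : g i with
    | some v => exact ⟨i, le_rfl, by simp [fillMax, hgi]⟩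
    | none =>
      have hi0 : (i : ℕ) ≠ 0 := fun h0 => by simp [hg.eq_some_zero i h0] at hgi
      have hne : (Finset.Iio i).Nonempty := ⟨⟨0, i.pos⟩, by simp [Fin.lt_def]; omega⟩
      obtain ⟨j, hj, hsup⟩ := Finset.exists_mem_eq_sup _ hne fun j => (g j).getD 0
      have hval : fillMax g i = (g j).getD 0 := by simp [fillMax, hgi, hsup]
      cases hgj : g j with
      | some w => exact ⟨j, (Finset.mem_Iio.1 hj).le, by simp [hval, hgj]⟩
      | none =>
        refine ⟨⟨0, i.pos⟩, Fin.le_def.2 (Nat.zero_le _), ?_⟩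
        simp [hval, hgj, hg.eq_some_zero]

lemma repeatsAreMaxima_fillMax (hg : IsMarking g) : RepeatsAreMaxima (fillMax g) := by
  intro j k hjk hkj i hik
  have hk : g k = none := by
    rw [← (isFilling_fillMax hg).firstOcc_eq hg]
    exact firstOcc_eq_none_iff.2 fun h => h j hjk hkj.symm
  obtain ⟨i', hi'i, hi'⟩ := (isFilling_fillMax hg).exists_le_eq_some i
  simp only [fillMax, hk, Option.getD_none]
  calc fillMax g i = (g i').getD 0 := by simp [hi']
    _ ≤ _ := Finset.le_sup (f := fun j => (g j).getD 0) (Finset.mem_Iio.2 (hi'i.trans_lt hik))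

lemma RepeatsAreMaxima.fillMax_firstOcc {e : Fin n → ℕ} (hr : RepeatsAreMaxima e) :
    fillMax (firstOcc e) = e := by
  funext i
  by_cases hi : IsFirstOcc e i
  · simp [fillMax, firstOcc, hi]
  obtain ⟨j, hji, hje⟩ : ∃ j < i, e j = e i := by simpa [IsFirstOcc] using hi
  obtain ⟨f, hfi, hf, hfe⟩ := exists_isFirstOcc_le e i
  have hfi' : f < i := lt_of_le_of_ne hfi (by rintro rfl; exact hi hf)
  simp only [fillMax, firstOcc, if_neg hi, Option.getD_none]
  refine le_antisymm (Finset.sup_le fun k hk => ?_) ?_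
  · split_ifs
    · exact hr j i hji hje.symm k (Finset.mem_Iio.1 hk)
    · exact Nat.zero_le _
  · calc e i = (firstOcc e f).getD 0 := by simp [firstOcc, hf, hfe]
      _ ≤ _ := Finset.le_sup (f := fun j => (firstOcc e j).getD 0) (Finset.mem_Iio.2 hfi')

end Fillings

def equivContiguousValues :
    {e : Fin n → ℕ // InvSeq e ∧ ContiguousValues e} ≃ {g : Fin n → Option ℕ // IsMarking g} where
  toFun e := ⟨firstOcc e, isMarking_firstOcc e.2.1⟩
  invFun g := ⟨fillRuns g, (isFilling_fillRuns g.2).invSeq g.2, contiguousValues_fillRuns g.2⟩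
  left_inv e := Subtype.ext (e.2.2.fillRuns_firstOcc e.2.1)
  right_inv g := Subtype.ext ((isFilling_fillRuns g.2).firstOcc_eq g.2)

def equivRepeatsAreMaxima :
    {e : Fin n → ℕ // InvSeq e ∧ RepeatsAreMaxima e} ≃ {g : Fin n → Option ℕ // IsMarking g} where
  toFun e := ⟨firstOcc e, isMarking_firstOcc e.2.1⟩
  invFun g := ⟨fillMax g, (isFilling_fillMax g.2).invSeq g.2, repeatsAreMaxima_fillMax g.2⟩
  left_inv e := Subtype.ext e.2.2.fillMax_firstOcc
  right_inv g := Subtype.ext ((isFilling_fillMax g.2).firstOcc_eq g.2)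

lemma mem_image_iff_firstOcc {e : Fin n → ℕ} {v : ℕ} :
    v ∈ Finset.univ.image e ↔ ∃ i, firstOcc e i = some v := by
  simp only [Finset.mem_image, Finset.mem_univ, true_and, firstOcc_eq_some_iff]
  constructor
  · rintro ⟨i, rfl⟩
    obtain ⟨j, -, hj, hji⟩ := exists_isFirstOcc_le e i
    exact ⟨j, hj, hji⟩
  · rintro ⟨i, -, hi⟩
    exact ⟨i, hi⟩

lemma distStat_eq_of_firstOcc_eq {e e' : Fin n → ℕ} (h : firstOcc e = firstOcc e') :
    distStat e = distStat e' := by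
  have : Finset.univ.image e = Finset.univ.image e' := by
    ext v; rw [mem_image_iff_firstOcc, mem_image_iff_firstOcc, h]
  rw [distStat, distStat, this]

lemma eq_self_iff_firstOcc {e : Fin n → ℕ} (hs : InvSeq e) {i : Fin n} :
    e i = i ↔ firstOcc e i = some i := by
  refine ⟨fun h => firstOcc_eq_some_iff.2 ⟨fun j hji hj => ?_, h⟩,
    fun h => (firstOcc_eq_some_iff.1 h).2⟩
  have := hs j
  rw [Fin.lt_def] at hji
  omega

lemma satuStat_eq_of_firstOcc_eq {e e' : Fin n → ℕ} (hs : InvSeq e) (hs' : InvSeq e')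
    (h : firstOcc e = firstOcc e') : satuStat e = satuStat e' := by
  simp only [satuStat, eq_self_iff_firstOcc hs, eq_self_iff_firstOcc hs', h]

def ZerosInitial (e : Fin n → ℕ) : Prop := ∀ i, e i = 0 → ∀ j ≤ i, e j = 0

lemma eq_zero_iff_firstOcc {e : Fin n → ℕ} (hz : ZerosInitial e) {i : Fin n} :
    e i = 0 ↔ ∀ j ≤ i, ∀ v, firstOcc e j = some v → v = 0 := by
  refine ⟨fun h j hji v hj => ?_, fun h => ?_⟩
  · rw [← (firstOcc_eq_some_iff.1 hj).2]
    exact hz i h j hji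
  · obtain ⟨j, hji, hj, hje⟩ := exists_isFirstOcc_le e i
    exact hje ▸ h j hji (e j) (firstOcc_eq_some_iff.2 ⟨hj, rfl⟩)

lemma zeroStat_eq_of_firstOcc_eq {e e' : Fin n → ℕ} (hz : ZerosInitial e) (hz' : ZerosInitial e')
    (h : firstOcc e = firstOcc e') :
    zeroStat e = zeroStat e' := by
  simp only [zeroStat, eq_zero_iff_firstOcc hz, eq_zero_iff_firstOcc hz', h]

lemma ContiguousValues.zerosInitial {e : Fin n → ℕ} (hc : ContiguousValues e) (hs : InvSeq e) :
    ZerosInitial e := by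
  intro i hi j hji
  have h0 : e ⟨0, i.pos⟩ = 0 := Nat.le_zero.1 (hs _)
  rcases Nat.eq_zero_or_pos (j : ℕ) with hj | hj
  · exact Nat.le_zero.1 (hj ▸ hs j)
  rcases hji.lt_or_eq with hji | rfl
  · rw [hc _ j i (Fin.lt_def.2 hj) hji (hi.trans h0.symm), h0]
  · exact hi

lemma RepeatsAreMaxima.zerosInitial {e : Fin n → ℕ} (hr : RepeatsAreMaxima e) (hs : InvSeq e) :
    ZerosInitial e := by
  intro i hi j hji
  rcases Nat.eq_zero_or_pos (i : ℕ) with hi0 | hi0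
  · have := hs j
    rw [Fin.le_def] at hji
    omega
  have h0 : e ⟨0, i.pos⟩ = 0 := Nat.le_zero.1 (hs _)
  rcases hji.lt_or_eq with hji | rfl
  · exact Nat.le_zero.1 (hi ▸ hr _ i (Fin.lt_def.2 hi0) (hi.trans h0.symm) j hji)
  · exact hi

theorem card_avoiding_010_101_eq_card_avoiding_010_100 (a b c : ℕ) :
    Nat.card {e : Fin n → ℕ // InvSeq e ∧ Avoids e [0,1,0] ∧ Avoids e [1,0,1] ∧
      distStat e = a ∧ satuStat e = b ∧ zeroStat e = c}
    = Nat.card {e : Fin n → ℕ // InvSeq e ∧ Avoids e [0,1,0] ∧ Avoids e [1,0,0] ∧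
      distStat e = a ∧ satuStat e = b ∧ zeroStat e = c} := by
  let stats (e : Fin n → ℕ) : ℕ × ℕ × ℕ := (distStat e, satuStat e, zeroStat e)
  let Φ := equivContiguousValues.trans (equivRepeatsAreMaxima (n := n)).symm
  have hΦ (e) : stats (Φ e).1 = stats e.1 := by
    obtain ⟨hs, hr⟩ := (Φ e).2
    have h : firstOcc (Φ e).1 = firstOcc e.1 :=
      congrArg Subtype.val (equivRepeatsAreMaxima.apply_symm_apply _)
    simp only [stats, distStat_eq_of_firstOcc_eq h, satuStat_eq_of_firstOcc_eq hs e.2.1 h,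
      zeroStat_eq_of_firstOcc_eq (hr.zerosInitial hs) (e.2.2.zerosInitial e.2.1) h]
  have key := (Nat.card_and_eq_of_equiv Φ hΦ (a, b, c)).trans
    (Nat.card_congr (Equiv.subtypeSubtypeEquivSubtypeInter _ (stats · = (a, b, c))))
  simpa only [stats, ← avoids_010_and_101_iff, ← avoids_010_and_100_iff, Prod.mk.injEq,
    and_assoc] using key

def root (f : Fin n → Fin n) (i : Fin n) : Fin n := if f i < i then root f (f i) else i
termination_by i

section Root

variable {f : Fin n → Fin n}

lemma root_of_lt {i : Fin n} (h : f i < i) : root f i = root f (f i) := by rw [root, if_pos h]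

lemma root_of_not_lt {i : Fin n} (h : ¬ f i < i) : root f i = i := by rw [root, if_neg h]

lemma root_le (i : Fin n) : root f i ≤ i := by
  induction i using WellFoundedLT.induction with
  | _ i ih =>
    by_cases h : f i < i
    · exact (root_of_lt h).trans_le ((ih _ h).trans h.le)
    · exact (root_of_not_lt h).le

lemma root_le_apply (i : Fin n) : root f i ≤ f i := by
  by_cases h : f i < i
  · exact (root_of_lt h).trans_le (root_le _)
  · exact (root_of_not_lt h).trans_le (not_lt.1 h)

lemma root_eq_self_iff {i : Fin n} : root f i = i ↔ ¬ f i < i := by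
  refine ⟨fun hr h => ?_, root_of_not_lt⟩
  exact (root_le (f i)).not_gt (by rwa [← root_of_lt h, hr])

lemma root_root (i : Fin n) : root f (root f i) = root f i := by
  induction i using WellFoundedLT.induction with
  | _ i ih =>
    by_cases h : f i < i
    · rw [root_of_lt h, ih _ h]
    · rw [root_of_not_lt h, root_of_not_lt h]

end Root

/-- A forest on positions whose trees are the blocks of the set partition encoded by `g`. -/
def parent (g : Fin n → Option ℕ) (i : Fin n) : Fin n :=
  match g i with
  | some v => if h : v < i then ⟨v, h.trans i.isLt⟩ else ⟨0, i.pos⟩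
  | none => i

section Parent

variable {g : Fin n → Option ℕ}

lemma parent_of_eq_none {i : Fin n} (h : g i = none) : parent g i = i := by simp [parent, h]

lemma parent_of_lt {i : Fin n} {v : ℕ} (h : g i = some v) (hv : v < i) :
    parent g i = ⟨v, hv.trans i.isLt⟩ := by simp [parent, h, hv]

lemma root_parent_of_lt {i : Fin n} {v : ℕ} (h : g i = some v) (hv : v < i) :
    root (parent g) i = root (parent g) ⟨v, hv.trans i.isLt⟩ := by
  rw [root_of_lt (by rw [parent_of_lt h hv]; exact Fin.lt_def.2 hv), parent_of_lt h hv]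

lemma val_parent_of_eq_self {i : Fin n} (h : g i = some i) : (parent g i : ℕ) = 0 := by
  simp [parent, h]

lemma IsMarking.root_parent_eq_self_iff (hg : IsMarking g) {i : Fin n} :
    root (parent g) i = i ↔ g i = none ∨ (i : ℕ) = 0 := by
  rw [root_eq_self_iff]
  cases hgi : g i with
  | none => simp [parent_of_eq_none hgi]
  | some v =>
    rcases (hg.le_of_eq_some i v hgi).lt_or_eq with hv | rfl
    · simp [parent_of_lt hgi hv, Fin.lt_def, hv]
      omega
    · simp [Fin.lt_def, val_parent_of_eq_self hgi, Nat.pos_iff_ne_zero]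

lemma IsMarking.val_root_parent_eq_zero_iff (hg : IsMarking g) {i : Fin n} :
    (root (parent g) i : ℕ) = 0 ↔ g i = some i := by
  induction i using WellFoundedLT.induction with
  | _ i ih =>
  cases hgi : g i with
  | none =>
    have hi0 : (i : ℕ) ≠ 0 := fun h0 => by simp [hg.eq_some_zero i h0] at hgi
    simp [hg.root_parent_eq_self_iff.2 (Or.inl hgi), hi0]
  | some v =>
    rcases (hg.le_of_eq_some i v hgi).lt_or_eq with hv | rfl
    · rw [root_parent_of_lt hgi hv, ih _ (Fin.lt_def.2 hv)]
      refine ⟨fun h => absurd (congrArg Fin.val (hg.injective _ _ v h hgi)) hv.ne, fun h => ?_⟩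
      simp at h
      omega
    · simpa [val_parent_of_eq_self hgi] using Fin.le_def.1 (root_le_apply (f := parent g) i)

/-- Marked values being distinct, a counterexample `j` would have a parent `w` with `v < w < j`
in the same tree, and we descend. -/
lemma IsMarking.le_of_root_parent_eq (hg : IsMarking g) {i : Fin n} {v : ℕ} (hi : g i = some v)
    (hv : v < i) {j : Fin n} (hji : j < i) (hr : root (parent g) j = root (parent g) i) :
    (j : ℕ) ≤ v := by
  induction i using WellFoundedLT.induction generalizing v j with
  | _ i ihi =>
  induction j using WellFoundedLT.induction with
  | _ j ihj =>
  by_contra! hvj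
  have hri := root_parent_of_lt hi hv
  have hj : ¬ (g j = none ∨ (j : ℕ) = 0) := by
    rw [← hg.root_parent_eq_self_iff]
    intro hjj
    have := Fin.le_def.1 (root_le (f := parent g) ⟨v, hv.trans i.isLt⟩)
    rw [← hri, ← hr, hjj] at this
    exact absurd this (not_le.2 hvj)
  obtain ⟨w, hgj⟩ := Option.ne_none_iff_exists'.1 (not_or.1 hj).1
  have hwj : w < j := by
    refine (hg.le_of_eq_some j w hgj).lt_of_ne fun hwj => hv.ne ?_
    have h0 := hg.val_root_parent_eq_zero_iff.2 (hwj ▸ hgj)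
    rw [hr, hg.val_root_parent_eq_zero_iff, hi] at h0
    exact Option.some.inj h0
  have hrw := (root_parent_of_lt hgj hwj).symm.trans hr
  have hvw : v ≤ w :=
    ihi j hji hgj hwj (j := ⟨v, hv.trans i.isLt⟩) (Fin.lt_def.2 hvj) (hri ▸ hr).symm
  have hvw' : v ≠ w := fun h => hji.ne (hg.injective j i v (h ▸ hgj) hi)
  exact absurd (ihj ⟨w, hwj.trans j.isLt⟩ (Fin.lt_def.2 hwj) ((Fin.lt_def.2 hwj).trans hji) hrw)
    (not_le.2 (lt_of_le_of_ne hvw hvw'))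

end Parent

open Finpartition

def toPartition (g : Fin n → Option ℕ) : Finpartition (Finset.univ : Finset (Fin n)) :=
  ofSetoid (Setoid.ker (root (parent g)))

section Blocks

variable (P : Finpartition (Finset.univ : Finset (Fin n)))

def blockMin (i : Fin n) : Fin n := (P.part i).min' ⟨i, P.mem_part (Finset.mem_univ i)⟩

/-- Junk value `0` when `i` is the minimum of its block. -/
def blockPred (i : Fin n) : ℕ := ((P.part i).filter (· < i)).sup Fin.val

def markingOf (i : Fin n) : Option ℕ :=
  if (blockMin P i : ℕ) = 0 then some i
  else if blockMin P i = i then none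
  else some (blockPred P i)

lemma blockMin_mem (i : Fin n) : blockMin P i ∈ P.part i := Finset.min'_mem _ _

lemma blockMin_le {i j : Fin n} (hj : j ∈ P.part i) : blockMin P i ≤ j := Finset.min'_le _ _ hj

lemma blockMin_le_self (i : Fin n) : blockMin P i ≤ i :=
  blockMin_le P (P.mem_part (Finset.mem_univ i))

lemma blockMin_eq_blockMin_iff {i j : Fin n} : blockMin P i = blockMin P j ↔ j ∈ P.part i := by
  rw [P.mem_part_iff_part_eq_part (Finset.mem_univ j) (Finset.mem_univ i)]
  refine ⟨fun h => ?_, fun h => by simp only [blockMin, h]⟩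
  have hi := P.part_eq_of_mem (P.part_mem.2 (Finset.mem_univ i)) (h ▸ blockMin_mem P i)
  have hj := P.part_eq_of_mem (P.part_mem.2 (Finset.mem_univ j)) (blockMin_mem P j)
  exact hj.symm.trans hi

lemma le_blockPred {i j : Fin n} (hj : j ∈ P.part i) (hji : j < i) : (j : ℕ) ≤ blockPred P i :=
  Finset.le_sup (f := Fin.val) (Finset.mem_filter.2 ⟨hj, hji⟩)

lemma exists_blockPred {i : Fin n} (h : blockMin P i < i) :
    ∃ p ∈ P.part i, p < i ∧ (p : ℕ) = blockPred P i := by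
  obtain ⟨p, hp, hpv⟩ := Finset.exists_mem_eq_sup _
    ⟨_, (Finset.mem_filter.2 ⟨blockMin_mem P i, h⟩ : blockMin P i ∈ (P.part i).filter (· < i))⟩
    Fin.val
  exact ⟨p, (Finset.mem_filter.1 hp).1, (Finset.mem_filter.1 hp).2, hpv.symm⟩

lemma eq_of_blockPred_eq {i j : Fin n} (hi : blockMin P i < i) (hj : blockMin P j < j)
    (h : blockPred P i = blockPred P j) : i = j := by
  obtain ⟨p, hp, hpi, hpv⟩ := exists_blockPred P hi
  obtain ⟨q, hq, hqj, hqv⟩ := exists_blockPred P hj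
  obtain rfl : q = p := Fin.ext (by rw [hpv, hqv, h])
  have hij : blockMin P i = blockMin P j :=
    ((blockMin_eq_blockMin_iff P).2 hp).trans ((blockMin_eq_blockMin_iff P).2 hq).symm
  rcases lt_trichotomy i j with h | h | h
  · have := le_blockPred P ((blockMin_eq_blockMin_iff P).1 hij.symm) h
    rw [← hqv] at this
    exact absurd hpi (not_lt.2 (Fin.le_def.2 this))
  · exact h
  · have := le_blockPred P ((blockMin_eq_blockMin_iff P).1 hij) h
    rw [← hpv] at this
    exact absurd hqj (not_lt.2 (Fin.le_def.2 this))

lemma markingOf_eq_some {i : Fin n} {v : ℕ} (h : markingOf P i = some v) :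
    ((blockMin P i : ℕ) = 0 ∧ v = i) ∨
      (0 < (blockMin P i : ℕ) ∧ blockMin P i < i ∧ v = blockPred P i) := by
  unfold markingOf at h
  split_ifs at h with h0 hi
  · exact Or.inl ⟨h0, (Option.some.inj h).symm⟩
  · exact Or.inr ⟨Nat.pos_of_ne_zero h0, lt_of_le_of_ne (blockMin_le_self P i) hi,
      (Option.some.inj h).symm⟩

lemma isMarking_markingOf : IsMarking (markingOf P) where
  le_of_eq_some i v h := by
    rcases markingOf_eq_some P h with ⟨-, rfl⟩ | ⟨-, hlt, rfl⟩
    · exact le_rfl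
    · obtain ⟨p, -, hp, hpv⟩ := exists_blockPred P hlt
      exact hpv ▸ (Fin.lt_def.1 hp).le
  eq_zero_iff i v h := by
    rcases markingOf_eq_some P h with ⟨-, rfl⟩ | ⟨h0, hlt, rfl⟩
    · exact Iff.rfl
    · have := le_blockPred P (blockMin_mem P i) hlt
      have := Fin.lt_def.1 hlt
      omega
  injective i j v hi hj := by
    rcases markingOf_eq_some P hi with ⟨hi0, rfl⟩ | ⟨hi0, hilt, hiv⟩ <;>
      rcases markingOf_eq_some P hj with ⟨hj0, hj⟩ | ⟨hj0, hjlt, hjv⟩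
    · exact Fin.ext hj
    · obtain ⟨p, hp, -, hpv⟩ := exists_blockPred P hjlt
      obtain rfl : p = i := Fin.ext (hpv.trans hjv.symm)
      rw [(blockMin_eq_blockMin_iff P).2 hp] at hj0
      omega
    · obtain ⟨p, hp, -, hpv⟩ := exists_blockPred P hilt
      obtain rfl : p = j := Fin.ext (hpv.trans (hiv.symm.trans hj))
      rw [(blockMin_eq_blockMin_iff P).2 hp] at hi0
      omega
    · exact eq_of_blockPred_eq P hilt hjlt (hiv.symm.trans hjv)
  eq_some_zero i h0 := by
    have : (blockMin P i : ℕ) = 0 := by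
      have := Fin.le_def.1 (blockMin_le_self P i)
      omega
    simp [markingOf, this, h0]

lemma root_parent_markingOf (i : Fin n) : root (parent (markingOf P)) i = blockMin P i := by
  induction i using WellFoundedLT.induction with
  | _ i ih =>
  by_cases h0 : (blockMin P i : ℕ) = 0
  · have hm : markingOf P i = some i := by simp [markingOf, h0]
    have := Fin.le_def.1 (root_le_apply (f := parent (markingOf P)) i)
    rw [val_parent_of_eq_self hm] at this
    exact Fin.ext (by omega)
  by_cases hii : blockMin P i = i
  · have hm : markingOf P i = none := by simp [markingOf, hii, hii ▸ h0]
    rw [root_of_not_lt (by rw [parent_of_eq_none hm]; exact lt_irrefl _), hii]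
  · obtain ⟨p, hp, hpi, hpv⟩ := exists_blockPred P (lt_of_le_of_ne (blockMin_le_self P i) hii)
    have hm : markingOf P i = some p := by simp [markingOf, h0, hii, hpv]
    rw [root_parent_of_lt hm hpi, Fin.eta, ih p hpi, (blockMin_eq_blockMin_iff P).2 hp]

lemma toPartition_markingOf : toPartition (markingOf P) = P :=
  ofSetoid_ker_eq fun a b => by
    rw [root_parent_markingOf, root_parent_markingOf, blockMin_eq_blockMin_iff]

end Blocks

section Marking

variable {g : Fin n → Option ℕ}

lemma blockMin_toPartition (i : Fin n) : blockMin (toPartition g) i = root (parent g) i := by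
  refine le_antisymm (blockMin_le _ (mem_part_ofSetoid_ker.2 (root_root i).symm)) ?_
  rw [mem_part_ofSetoid_ker.1 (blockMin_mem (toPartition g) i)]
  exact root_le _

lemma IsMarking.markingOf_toPartition (hg : IsMarking g) : markingOf (toPartition g) = g := by
  funext i
  simp only [markingOf, blockMin_toPartition]
  cases hgi : g i with
  | none =>
    have hr := hg.root_parent_eq_self_iff.2 (Or.inl hgi)
    have h0 : (root (parent g) i : ℕ) ≠ 0 := by simp [hg.val_root_parent_eq_zero_iff, hgi]
    rw [hr] at h0 ⊢
    simp [h0]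
  | some v =>
    rcases (hg.le_of_eq_some i v hgi).lt_or_eq with hv | rfl
    · have h0 : (root (parent g) i : ℕ) ≠ 0 := by
        simp [hg.val_root_parent_eq_zero_iff, hgi, hv.ne]
      have hr : root (parent g) i ≠ i := by
        rw [Ne, hg.root_parent_eq_self_iff, hgi]
        simp only [reduceCtorEq, false_or]
        omega
      simp only [h0, hr, if_false, Option.some.injEq]
      refine le_antisymm (Finset.sup_le fun j hj => ?_) ?_
      · obtain ⟨hj, hji⟩ := Finset.mem_filter.1 hj
        exact hg.le_of_root_parent_eq hgi hv hji (mem_part_ofSetoid_ker.1 hj).symm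
      · exact le_blockPred _ (mem_part_ofSetoid_ker.2 (root_parent_of_lt hgi hv)) (Fin.lt_def.2 hv)
    · simp [hg.val_root_parent_eq_zero_iff.2 hgi]

lemma IsMarking.card_parts_toPartition (hg : IsMarking g) (hn : 0 < n) :
    (toPartition g).parts.card = (Finset.univ.filter (g · = none)).card + 1 := by
  have himage : Finset.univ.image (root (parent g)) =
      insert ⟨0, hn⟩ (Finset.univ.filter (g · = none)) := by
    ext i
    simp only [Finset.mem_image, Finset.mem_univ, true_and, Finset.mem_insert,
      Finset.mem_filter]
    constructor
    · rintro ⟨j, rfl⟩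
      rcases hg.root_parent_eq_self_iff.1 (root_root j) with h | h
      · exact Or.inr h
      · exact Or.inl (Fin.ext h)
    · rintro (rfl | h)
      · exact ⟨_, hg.root_parent_eq_self_iff.2 (Or.inr rfl)⟩
      · exact ⟨_, hg.root_parent_eq_self_iff.2 (Or.inl h)⟩
  calc (toPartition g).parts.card = (Finset.univ.image (root (parent g))).card :=
        card_parts_ofSetoid_ker _
    _ = _ := by rw [himage, Finset.card_insert_of_notMem (by simp [hg.eq_some_zero])]

end Marking

def equivFinpartition :
    {g : Fin n → Option ℕ // IsMarking g} ≃ Finpartition (Finset.univ : Finset (Fin n)) where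
  toFun g := toPartition g.1
  invFun P := ⟨markingOf P, isMarking_markingOf P⟩
  left_inv g := Subtype.ext g.2.markingOf_toPartition
  right_inv := toPartition_markingOf

lemma card_image_eq_card_isFirstOcc (e : Fin n → ℕ) :
    (Finset.univ.image e).card = (Finset.univ.filter (IsFirstOcc e)).card := by
  have himage : Finset.univ.image e = (Finset.univ.filter (IsFirstOcc e)).image e := by
    ext v
    simp only [Finset.mem_image, Finset.mem_univ, true_and, Finset.mem_filter]
    constructor
    · rintro ⟨i, rfl⟩
      obtain ⟨j, -, hj, hji⟩ := exists_isFirstOcc_le e i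
      exact ⟨j, hj, hji⟩
    · rintro ⟨i, -, rfl⟩
      exact ⟨i, rfl⟩
  rw [himage, Finset.card_image_of_injOn]
  intro i hi j hj hij
  exact (Finset.mem_filter.1 hi).2.eq_of_eq (Finset.mem_filter.1 hj).2 hij

lemma repStat_eq {e : Fin n → ℕ} (hs : InvSeq e) (hn : 0 < n) :
    repStat e = (Finset.univ.filter (firstOcc e · = none)).card + 1 := by
  have h0 : 0 ∈ Finset.univ.image e :=
    Finset.mem_image.2 ⟨⟨0, hn⟩, Finset.mem_univ _, Nat.le_zero.1 (hs _)⟩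
  have hdist : distStat e = (Finset.univ.image e).card - 1 := by
    rw [distStat, ← Finset.card_erase_of_mem h0, ← Finset.filter_ne']
    simp only [Nat.pos_iff_ne_zero]
  have hpos := Finset.card_pos.2 ⟨0, h0⟩
  have hsplit := Finset.card_filter_add_card_filter_not (s := Finset.univ) (IsFirstOcc e)
  simp only [firstOcc_eq_none_iff, Finset.card_univ, Fintype.card_fin] at hsplit ⊢
  rw [repStat, hdist, card_image_eq_card_isFirstOcc e] at *
  omega

theorem card_avoiding_010_100_repStat_eq_stirling2 (hn : 0 < n) (k : ℕ) :
    Nat.card {e : Fin n → ℕ // InvSeq e ∧ Avoids e [0,1,0] ∧ Avoids e [1,0,0] ∧ repStat e = k}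
      = stirling2 n k := by
  have key := Nat.card_and_eq_of_equiv ((equivRepeatsAreMaxima (n := n)).trans equivFinpartition)
    (s := repStat) (t := fun P => P.parts.card) (fun e => ?_) k
  · simpa only [stirling2, ← avoids_010_and_100_iff, and_assoc] using key
  · show (toPartition (firstOcc e.1)).parts.card = repStat e.1
    rw [(isMarking_firstOcc e.2.1).card_parts_toPartition hn, repStat_eq e.2.1 hn]

end InversionSequence

theorem stmt_15_general (n : ℕ) :
    (∀ a b c : ℕ,
      Nat.card {e : Fin n → ℕ // InvSeq e ∧ Avoids e [0,1,0] ∧ Avoids e [1,0,1] ∧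
        distStat e = a ∧ satuStat e = b ∧ zeroStat e = c}
      = Nat.card {e : Fin n → ℕ // InvSeq e ∧ Avoids e [0,1,0] ∧ Avoids e [1,0,0] ∧
        distStat e = a ∧ satuStat e = b ∧ zeroStat e = c}) ∧
    (∀ k : ℕ, 1 ≤ k → k ≤ n →
      Nat.card {e : Fin n → ℕ // InvSeq e ∧ Avoids e [0,1,0] ∧ Avoids e [1,0,0] ∧
        repStat e = k} = stirling2 n k) :=
  ⟨InversionSequence.card_avoiding_010_101_eq_card_avoiding_010_100, fun k hk hkn =>
    InversionSequence.card_avoiding_010_100_repStat_eq_stirling2 (by omega) k⟩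

theorem stmt_15 (n : ℕ) (hn : 1 ≤ n) :
    (∀ a b c : ℕ,
      Nat.card {e : Fin n → ℕ // InvSeq e ∧ Avoids e [0,1,0] ∧ Avoids e [1,0,1] ∧
        distStat e = a ∧ satuStat e = b ∧ zeroStat e = c}
      = Nat.card {e : Fin n → ℕ // InvSeq e ∧ Avoids e [0,1,0] ∧ Avoids e [1,0,0] ∧
        distStat e = a ∧ satuStat e = b ∧ zeroStat e = c}) ∧
    (∀ k : ℕ, 1 ≤ k → k ≤ n →
      Nat.card {e : Fin n → ℕ // InvSeq e ∧ Avoids e [0,1,0] ∧ Avoids e [1,0,0] ∧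
        repStat e = k} = stirling2 n k) :=
  stmt_15_general n
end

section
/- For every integer n ≥ 1, the following three Wilf-equivalences hold: |I_n(011,201)| = |I_n(011,210)|, |I_n(000,201)| = |I_n(000,210)|, and |I_n(100,021)| = |I_n(110,021)|. -/
namespace Wilf
variable {n : ℕ}

lemma strictMono3 {f : Fin 3 → Fin n} (h01 : f 0 < f 1) (h12 : f 1 < f 2) : StrictMono f := by
  intro a b hab
  fin_cases a <;> fin_cases b <;>
    first | exact h01 | exact h12 | exact h01.trans h12 | exact absurd hab (by decide)

lemma contains3 (e : Fin n → ℕ) (p0 p1 p2 : ℕ) :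
    Contains e [p0,p1,p2] ↔ ∃ i j k : Fin n, i < j ∧ j < k ∧
      (p0 < p1 ↔ e i < e j) ∧ (p0 = p1 ↔ e i = e j) ∧
      (p0 < p2 ↔ e i < e k) ∧ (p0 = p2 ↔ e i = e k) ∧
      (p1 < p2 ↔ e j < e k) ∧ (p1 = p2 ↔ e j = e k) := by
  constructor
  · rintro ⟨s, hs, hc⟩
    let s3 : Fin 3 → Fin n := s
    have hs' : StrictMono s3 := hs
    have hc' : ∀ a b : Fin 3,
        ([p0,p1,p2].get a < [p0,p1,p2].get b ↔ e (s a) < e (s b)) ∧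
        ([p0,p1,p2].get a = [p0,p1,p2].get b ↔ e (s a) = e (s b)) := hc
    refine ⟨s3 0, s3 1, s3 2, hs' (by decide), hs' (by decide), ?_, ?_, ?_, ?_, ?_, ?_⟩
    · exact (hc' 0 1).1
    · exact (hc' 0 1).2
    · exact (hc' 0 2).1
    · exact (hc' 0 2).2
    · exact (hc' 1 2).1
    · exact (hc' 1 2).2
  · rintro ⟨i, j, k, hij, hjk, h1, h2, h3, h4, h5, h6⟩
    refine ⟨fun a => if a.val = 0 then i else if a.val = 1 then j else k,
      strictMono3 (by simpa using hij) (by simpa using hjk), ?_⟩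
    intro a b
    have ha : a = ⟨0, by norm_num⟩ ∨ a = ⟨1, by norm_num⟩ ∨ a = ⟨2, by norm_num⟩ := by
      rcases a with ⟨av, hav⟩
      simp only [List.length_cons, List.length_nil] at hav
      interval_cases av <;> simp
    have hb : b = ⟨0, by norm_num⟩ ∨ b = ⟨1, by norm_num⟩ ∨ b = ⟨2, by norm_num⟩ := by
      rcases b with ⟨bv, hbv⟩
      simp only [List.length_cons, List.length_nil] at hbv
      interval_cases bv <;> simp
    rcases ha with rfl|rfl|rfl <;> rcases hb with rfl|rfl|rfl <;> simp [List.get] <;> omega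

end Wilf

namespace Wilf
variable {n : ℕ} (e : Fin n → ℕ)

lemma contains_201 : Contains e [2,0,1] ↔
    ∃ i j k : Fin n, i < j ∧ j < k ∧ e j < e k ∧ e k < e i := by
  rw [contains3]
  constructor
  · rintro ⟨i,j,k,h1,h2,h⟩; exact ⟨i,j,k,h1,h2, by omega⟩
  · rintro ⟨i,j,k,h1,h2,h⟩; exact ⟨i,j,k,h1,h2, by omega⟩

lemma contains_210 : Contains e [2,1,0] ↔
    ∃ i j k : Fin n, i < j ∧ j < k ∧ e k < e j ∧ e j < e i := by
  rw [contains3]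
  constructor
  · rintro ⟨i,j,k,h1,h2,h⟩; exact ⟨i,j,k,h1,h2, by omega⟩
  · rintro ⟨i,j,k,h1,h2,h⟩; exact ⟨i,j,k,h1,h2, by omega⟩

lemma contains_011 : Contains e [0,1,1] ↔
    ∃ i j k : Fin n, i < j ∧ j < k ∧ e i < e j ∧ e j = e k := by
  rw [contains3]
  constructor
  · rintro ⟨i,j,k,h1,h2,h⟩; exact ⟨i,j,k,h1,h2, by omega⟩
  · rintro ⟨i,j,k,h1,h2,h⟩; exact ⟨i,j,k,h1,h2, by omega⟩

lemma contains_000 : Contains e [0,0,0] ↔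
    ∃ i j k : Fin n, i < j ∧ j < k ∧ e i = e j ∧ e j = e k := by
  rw [contains3]
  constructor
  · rintro ⟨i,j,k,h1,h2,h⟩; exact ⟨i,j,k,h1,h2, by omega⟩
  · rintro ⟨i,j,k,h1,h2,h⟩; exact ⟨i,j,k,h1,h2, by omega⟩

lemma contains_100 : Contains e [1,0,0] ↔
    ∃ i j k : Fin n, i < j ∧ j < k ∧ e j < e i ∧ e j = e k := by
  rw [contains3]
  constructor
  · rintro ⟨i,j,k,h1,h2,h⟩; exact ⟨i,j,k,h1,h2, by omega⟩
  · rintro ⟨i,j,k,h1,h2,h⟩; exact ⟨i,j,k,h1,h2, by omega⟩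

lemma contains_110 : Contains e [1,1,0] ↔
    ∃ i j k : Fin n, i < j ∧ j < k ∧ e i = e j ∧ e k < e j := by
  rw [contains3]
  constructor
  · rintro ⟨i,j,k,h1,h2,h⟩; exact ⟨i,j,k,h1,h2, by omega⟩
  · rintro ⟨i,j,k,h1,h2,h⟩; exact ⟨i,j,k,h1,h2, by omega⟩

lemma contains_021 : Contains e [0,2,1] ↔
    ∃ i j k : Fin n, i < j ∧ j < k ∧ e i < e k ∧ e k < e j := by
  rw [contains3]
  constructor
  · rintro ⟨i,j,k,h1,h2,h⟩; exact ⟨i,j,k,h1,h2, by omega⟩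
  · rintro ⟨i,j,k,h1,h2,h⟩; exact ⟨i,j,k,h1,h2, by omega⟩

end Wilf

namespace Wilf
open scoped Classical
variable {n : ℕ}

/-- `i` is a "low" position of `e`: some earlier entry is strictly larger. -/
def Lw (e : Fin n → ℕ) (i : Fin n) : Prop := ∃ j, j < i ∧ e i < e j

/-- Multiset of values at low positions. -/
noncomputable def lowM (e : Fin n → ℕ) : Multiset ℕ :=
  (Finset.univ.val.filter (Lw e)).map e

/-- Same low positions, same values elsewhere, same multiset of low values. -/
def Sim (e f : Fin n → ℕ) : Prop :=
  (∀ i, Lw e i ↔ Lw f i) ∧ (∀ i, ¬ Lw e i → e i = f i) ∧ lowM e = lowM f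

lemma Sim.refl (e : Fin n → ℕ) : Sim e e := ⟨fun _ => Iff.rfl, fun _ _ => rfl, rfl⟩

lemma Sim.symm {e f : Fin n → ℕ} (h : Sim e f) : Sim f e :=
  ⟨fun i => (h.1 i).symm, fun i hi => (h.2.1 i ((h.1 i).not.mpr hi)).symm, h.2.2.symm⟩

lemma Sim.trans {e f g : Fin n → ℕ} (h : Sim e f) (h' : Sim f g) : Sim e g :=
  ⟨fun i => (h.1 i).trans (h'.1 i),
   fun i hi => (h.2.1 i hi).trans (h'.2.1 i ((h.1 i).not.mp hi)),
   h.2.2.trans h'.2.2⟩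

/-- The full value multiset. -/
noncomputable def valM (e : Fin n → ℕ) : Multiset ℕ := Finset.univ.val.map e

lemma Sim.valM_eq {e f : Fin n → ℕ} (h : Sim e f) : valM e = valM f := by
  have hsplit : ∀ g : Fin n → ℕ, valM g
      = (Finset.univ.val.filter (Lw g)).map g
        + (Finset.univ.val.filter (fun i => ¬ Lw g i)).map g := by
    intro g
    rw [← Multiset.map_add, Multiset.filter_add_not]
    rfl
  rw [hsplit e, hsplit f]
  have h1 : (Finset.univ.val.filter (Lw e)).map e = (Finset.univ.val.filter (Lw f)).map f :=
    h.2.2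
  have h2 : (Finset.univ.val.filter (fun i => ¬ Lw e i)).map e
      = (Finset.univ.val.filter (fun i => ¬ Lw f i)).map f := by
    rw [show (Finset.univ.val.filter (fun i => ¬ Lw e i))
        = (Finset.univ.val.filter (fun i => ¬ Lw f i)) from
      Multiset.filter_congr (fun i _ => by rw [h.1 i])]
    exact Multiset.map_congr rfl (fun i hi => h.2.1 i ((h.1 i).not.mpr (Multiset.mem_filter.mp hi).2))
  rw [h1, h2]

end Wilf

namespace Wilf
open scoped Classical
variable {n : ℕ}

lemma cnt_eq_card (e : Fin n → ℕ) (v : ℕ) :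
    Multiset.count v (valM e) = (Finset.univ.filter (fun i => e i = v)).card := by
  rw [valM, Multiset.count_map]
  congr 1
  exact Multiset.filter_congr (fun i _ => by constructor <;> (intro h; omega))

lemma sort3 {P : Fin n → Prop} {a b c : Fin n} (ha : P a) (hb : P b) (hc : P c)
    (hab : a ≠ b) (hac : a ≠ c) (hbc : b ≠ c) :
    ∃ x y z : Fin n, x < y ∧ y < z ∧ P x ∧ P y ∧ P z := by
  rcases lt_trichotomy a b with h1 | h1 | h1
  · rcases lt_trichotomy b c with h2 | h2 | h2
    · exact ⟨a, b, c, h1, h2, ha, hb, hc⟩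
    · exact absurd h2 hbc
    · rcases lt_trichotomy a c with h3 | h3 | h3
      · exact ⟨a, c, b, h3, h2, ha, hc, hb⟩
      · exact absurd h3 hac
      · exact ⟨c, a, b, h3, h1, hc, ha, hb⟩
  · exact absurd h1 hab
  · rcases lt_trichotomy a c with h2 | h2 | h2
    · exact ⟨b, a, c, h1, h2, hb, ha, hc⟩
    · exact absurd h2 hac
    · rcases lt_trichotomy b c with h3 | h3 | h3
      · exact ⟨b, c, a, h3, h2, hb, hc, ha⟩
      · exact absurd h3 hbc
      · exact ⟨c, b, a, h3, h1, hc, hb, ha⟩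

lemma char_011 (e : Fin n → ℕ) (hI : InvSeq e) :
    Contains e [0,1,1] ↔ ∃ v, 0 < v ∧ 1 < Multiset.count v (valM e) := by
  rw [contains_011 e]
  constructor
  · rintro ⟨i, j, k, hij, hjk, hlt, heq⟩
    refine ⟨e j, by omega, ?_⟩
    rw [cnt_eq_card]
    have hsub : ({j, k} : Finset (Fin n)) ⊆ Finset.univ.filter (fun i => e i = e j) := by
      intro x hx
      simp only [Finset.mem_insert, Finset.mem_singleton] at hx
      rcases hx with rfl | rfl <;> simp [heq]
    have : ({j, k} : Finset (Fin n)).card = 2 := Finset.card_pair (ne_of_lt hjk)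
    have := Finset.card_le_card hsub
    omega
  · rintro ⟨v, hv, hcnt⟩
    rw [cnt_eq_card] at hcnt
    obtain ⟨a, ha, b, hb, hab⟩ := Finset.one_lt_card.mp hcnt
    simp only [Finset.mem_filter] at ha hb
    have hea : e a = v := ha.2
    have heb : e b = v := hb.2
    -- the zero position
    have hn : 0 < n := a.pos
    set z : Fin n := ⟨0, hn⟩ with hz
    have hez : e z = 0 := Nat.le_antisymm (hI z) (Nat.zero_le _)
    have hpos : ∀ x : Fin n, e x = v → z < x := by
      intro x hx
      rw [Fin.lt_def]
      simp only [hz]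
      rcases Nat.eq_zero_or_pos x.val with h0 | h0
      · exfalso
        have : x = z := Fin.ext (by simp [hz, h0])
        rw [this, hez] at hx
        omega
      · exact h0
    rcases lt_trichotomy a b with h | h | h
    · exact ⟨z, a, b, hpos a hea, h, by omega, by omega⟩
    · exact absurd h hab
    · exact ⟨z, b, a, hpos b heb, h, by omega, by omega⟩

lemma char_000 (e : Fin n → ℕ) :
    Contains e [0,0,0] ↔ ∃ v, 2 < Multiset.count v (valM e) := by
  rw [contains_000 e]
  constructor
  · rintro ⟨i, j, k, hij, hjk, h1, h2⟩
    refine ⟨e i, ?_⟩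
    rw [cnt_eq_card]
    have hsub : ({i, j, k} : Finset (Fin n)) ⊆ Finset.univ.filter (fun m => e m = e i) := by
      intro x hx
      simp only [Finset.mem_insert, Finset.mem_singleton] at hx
      rcases hx with rfl | rfl | rfl <;> simp [h1, h2] <;> omega
    have hc3 : ({i, j, k} : Finset (Fin n)).card = 3 :=
      Finset.card_eq_three.mpr ⟨i, j, k, ne_of_lt hij, ne_of_lt (hij.trans hjk), ne_of_lt hjk, rfl⟩
    have := Finset.card_le_card hsub
    omega
  · rintro ⟨v, hcnt⟩
    rw [cnt_eq_card] at hcnt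
    obtain ⟨a, b, c, ha, hb, hc, hab, hac, hbc⟩ := Finset.two_lt_card_iff.mp hcnt
    simp only [Finset.mem_filter] at ha hb hc
    obtain ⟨x, y, z, hxy, hyz, hx, hy, hz⟩ :=
      sort3 (P := fun m => e m = v) ha.2 hb.2 hc.2 hab hac hbc
    exact ⟨x, y, z, hxy, hyz, by omega, by omega⟩

end Wilf

namespace Wilf
open scoped Classical
variable {n : ℕ}

/-- Swap the values of `e` at positions `j` and `k`. -/
def swp (e : Fin n → ℕ) (j k : Fin n) : Fin n → ℕ :=
  fun m => if m = j then e k else if m = k then e j else e m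

section Swap
variable {e : Fin n → ℕ} {j k i0 : Fin n}
variable (hjk : j < k) (hi0 : i0 < j) (h1 : e j < e i0) (h2 : e k < e i0)

include hjk in
lemma swp_j : swp e j k j = e k := by simp [swp]

include hjk in
lemma swp_k : swp e j k k = e j := by
  simp [swp, hjk.ne']

lemma swp_other {m : Fin n} (hmj : m ≠ j) (hmk : m ≠ k) : swp e j k m = e m := by
  simp [swp, hmj, hmk]

lemma swp_eq_comp : ∀ m, swp e j k m = e (Equiv.swap j k m) := by
  intro m
  rcases eq_or_ne m j with rfl | hmj
  · simp [swp, Equiv.swap_apply_left]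
  · rcases eq_or_ne m k with rfl | hmk
    · simp [swp, Equiv.swap_apply_right, if_neg hmj]
    · rw [swp_other hmj hmk, Equiv.swap_apply_of_ne_of_ne hmj hmk]

include hjk hi0 h1 h2 in
lemma swp_lw : ∀ m, Lw (swp e j k) m ↔ Lw e m := by
  have hne : j ≠ k := ne_of_lt hjk
  have hi0j : i0 ≠ j := ne_of_lt hi0
  have hi0k : i0 ≠ k := ne_of_lt (hi0.trans hjk)
  have hswpi0 : swp e j k i0 = e i0 := swp_other hi0j hi0k
  intro m
  rcases eq_or_ne m j with rfl | hmj
  · constructor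
    · intro _; exact ⟨i0, hi0, h1⟩
    · intro _; exact ⟨i0, hi0, by rw [swp_j hjk, hswpi0]; exact h2⟩
  · rcases eq_or_ne m k with rfl | hmk
    · constructor
      · intro _; exact ⟨i0, hi0.trans hjk, h2⟩
      · intro _; exact ⟨i0, hi0.trans hjk, by rw [swp_k hjk, hswpi0]; exact h1⟩
    · simp only [Lw, swp_other hmj hmk]
      constructor
      · rintro ⟨j', hj', hlt⟩
        rcases eq_or_ne j' j with rfl | h'j
        · rw [swp_j hjk] at hlt
          exact ⟨i0, hi0.trans hj', lt_trans hlt h2⟩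
        · rcases eq_or_ne j' k with rfl | h'k
          · rw [swp_k hjk] at hlt
            exact ⟨i0, lt_trans (hi0.trans hjk) hj', lt_trans hlt h1⟩
          · rw [swp_other h'j h'k] at hlt
            exact ⟨j', hj', hlt⟩
      · rintro ⟨j', hj', hlt⟩
        rcases eq_or_ne j' j with rfl | h'j
        · exact ⟨i0, hi0.trans hj', by rw [hswpi0]; exact lt_trans hlt h1⟩
        · rcases eq_or_ne j' k with rfl | h'k
          · exact ⟨i0, lt_trans (hi0.trans hjk) hj', by rw [hswpi0]; exact lt_trans hlt h2⟩
          · exact ⟨j', hj', by rw [swp_other h'j h'k]; exact hlt⟩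

include hjk hi0 h1 h2 in
lemma swp_invSeq (hI : InvSeq e) : InvSeq (swp e j k) := by
  intro m
  rcases eq_or_ne m j with rfl | hmj
  · rw [swp_j hjk]
    have : (i0 : ℕ) < (m : ℕ) := hi0
    have := hI i0
    omega
  · rcases eq_or_ne m k with rfl | hmk
    · rw [swp_k hjk]
      have : (j : ℕ) < (m : ℕ) := hjk
      have := hI j
      omega
    · rw [swp_other hmj hmk]; exact hI m

include hjk hi0 h1 h2 in
lemma swp_lowM : lowM (swp e j k) = lowM e := by
  have hLw := swp_lw hjk hi0 h1 h2
  have hLj : Lw e j := ⟨i0, hi0, h1⟩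
  have hLk : Lw e k := ⟨i0, hi0.trans hjk, h2⟩
  -- rewrite the filter for swp to the filter for e
  have hfil : Finset.univ.val.filter (Lw (swp e j k)) = Finset.univ.val.filter (Lw e) :=
    Multiset.filter_congr (fun m _ => hLw m)
  rw [lowM, hfil]
  -- now map (swp e j k) = map (e ∘ swap) and the swap permutes the filtered multiset
  have hmap : (Finset.univ.val.filter (Lw e)).map (swp e j k)
      = ((Finset.univ.val.filter (Lw e)).map (Equiv.swap j k)).map e := by
    rw [Multiset.map_map]
    exact Multiset.map_congr rfl (fun m _ => swp_eq_comp m)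
  rw [hmap, lowM]
  congr 1
  -- swap fixes the low filter multiset
  have : ∀ m, m ∈ Finset.univ.val.filter (Lw e) → Equiv.swap j k m ∈ Finset.univ.val.filter (Lw e) := by
    intro m hm
    rcases eq_or_ne m j with rfl | hmj
    · rw [Equiv.swap_apply_left]
      exact Multiset.mem_filter.mpr ⟨Finset.mem_univ_val _, hLk⟩
    · rcases eq_or_ne m k with rfl | hmk
      · rw [Equiv.swap_apply_right]
        exact Multiset.mem_filter.mpr ⟨Finset.mem_univ_val _, hLj⟩
      · rwa [Equiv.swap_apply_of_ne_of_ne hmj hmk]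
  -- a permutation mapping a finset-multiset into itself is onto it
  have hnodup : (Finset.univ.val.filter (Lw e)).Nodup :=
    Multiset.Nodup.filter _ Finset.univ.nodup
  apply Multiset.eq_of_le_of_card_le
  · refine (Multiset.le_iff_subset (hnodup.map (Equiv.swap j k).injective)).mpr ?_
    intro x hx
    obtain ⟨m, hm, rfl⟩ := Multiset.mem_map.mp hx
    exact this m hm
  · rw [Multiset.card_map]

end Swap
end Wilf

namespace Wilf
open scoped Classical
variable {n : ℕ}

lemma sum_swp (c : Fin n → ℕ) (e : Fin n → ℕ) {j k : Fin n} (hjk : j < k) :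
    ∑ i, c i * swp e j k i + c j * e j + c k * e k
      = ∑ i, c i * e i + c j * e k + c k * e j := by
  have hne : j ≠ k := ne_of_lt hjk
  have hkmem : k ∈ Finset.univ.erase j := Finset.mem_erase.mpr ⟨hne.symm, Finset.mem_univ k⟩
  have split : ∀ x : Fin n → ℕ, ∑ i, c i * x i
      = c j * x j + (c k * x k + ∑ i ∈ (Finset.univ.erase j).erase k, c i * x i) := by
    intro x
    rw [← Finset.add_sum_erase _ _ (Finset.mem_univ j), ← Finset.add_sum_erase _ _ hkmem]
  rw [split (swp e j k), split e, swp_j hjk, swp_k hjk]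
  have : ∑ i ∈ (Finset.univ.erase j).erase k, c i * swp e j k i
      = ∑ i ∈ (Finset.univ.erase j).erase k, c i * e i := by
    apply Finset.sum_congr rfl
    intro m hm
    have hmk : m ≠ k := (Finset.mem_erase.mp hm).1
    have hmj : m ≠ j := (Finset.mem_erase.mp (Finset.mem_erase.mp hm).2).1
    rw [swp_other hmj hmk]
  rw [this]
  ring

lemma exists_sim_avoid210 (e : Fin n → ℕ) (hI : InvSeq e) :
    ∃ f, InvSeq f ∧ Sim e f ∧ Avoids f [2,1,0] := by
  set c : Fin n → ℕ := fun i => n - (i : ℕ) with hc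
  suffices H : ∀ N : ℕ, ∀ e : Fin n → ℕ, InvSeq e → (∑ i, c i * e i) < N →
      ∃ f, InvSeq f ∧ Sim e f ∧ Avoids f [2,1,0] by
    exact H (∑ i, c i * e i + 1) e hI (Nat.lt_succ_self _)
  intro N
  induction N with
  | zero => intro e _ h; omega
  | succ N ih =>
    intro e hI hlt
    by_cases hA : Avoids e [2,1,0]
    · exact ⟨e, hI, Sim.refl e, hA⟩
    · rw [Avoids, not_not, contains_210] at hA
      obtain ⟨i0, j, k, hi0, hjk, hkj, hji⟩ := hA
      have h2 : e k < e i0 := hkj.trans hji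
      have hE := swp_lowM hjk hi0 hji h2
      have hSim : Sim e (swp e j k) :=
        ⟨fun m => (swp_lw hjk hi0 hji h2 m).symm,
         fun m hm => by
           have hmj : m ≠ j := by rintro rfl; exact hm ⟨i0, hi0, hji⟩
           have hmk : m ≠ k := by rintro rfl; exact hm ⟨i0, hi0.trans hjk, h2⟩
           exact (swp_other hmj hmk).symm,
         hE.symm⟩
      have hI' : InvSeq (swp e j k) := swp_invSeq hjk hi0 hji h2 hI
      have hmeas : ∑ i, c i * swp e j k i < ∑ i, c i * e i := by
        have key := sum_swp c e hjk
        have hcc : c k < c j := by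
          have h1 : (j : ℕ) < (k : ℕ) := hjk
          have h2 : (k : ℕ) < n := k.isLt
          simp only [hc]
          omega
        have hvv : e k < e j := hkj
        nlinarith [key]
      obtain ⟨f, hIf, hSf, hAf⟩ := ih (swp e j k) hI' (by omega)
      exact ⟨f, hIf, hSim.trans hSf, hAf⟩

lemma exists_sim_avoid201 (e : Fin n → ℕ) (hI : InvSeq e) :
    ∃ f, InvSeq f ∧ Sim e f ∧ Avoids f [2,0,1] := by
  set c : Fin n → ℕ := fun i => (i : ℕ) with hc
  suffices H : ∀ N : ℕ, ∀ e : Fin n → ℕ, InvSeq e → (∑ i, c i * e i) < N →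
      ∃ f, InvSeq f ∧ Sim e f ∧ Avoids f [2,0,1] by
    exact H (∑ i, c i * e i + 1) e hI (Nat.lt_succ_self _)
  intro N
  induction N with
  | zero => intro e _ h; omega
  | succ N ih =>
    intro e hI hlt
    by_cases hA : Avoids e [2,0,1]
    · exact ⟨e, hI, Sim.refl e, hA⟩
    · rw [Avoids, not_not, contains_201] at hA
      obtain ⟨i0, j, k, hi0, hjk, hjK, hKi⟩ := hA
      -- e j < e k < e i0
      have h1 : e j < e i0 := hjK.trans hKi
      have hE := swp_lowM hjk hi0 h1 hKi
      have hSim : Sim e (swp e j k) :=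
        ⟨fun m => (swp_lw hjk hi0 h1 hKi m).symm,
         fun m hm => by
           have hmj : m ≠ j := by rintro rfl; exact hm ⟨i0, hi0, h1⟩
           have hmk : m ≠ k := by rintro rfl; exact hm ⟨i0, hi0.trans hjk, hKi⟩
           exact (swp_other hmj hmk).symm,
         hE.symm⟩
      have hI' : InvSeq (swp e j k) := swp_invSeq hjk hi0 h1 hKi hI
      have hmeas : ∑ i, c i * swp e j k i < ∑ i, c i * e i := by
        have key := sum_swp c e hjk
        have hcc : c j < c k := by
          have h1 : (j : ℕ) < (k : ℕ) := hjk
          simp only [hc]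
          omega
        have hvv : e j < e k := hjK
        nlinarith [key]
      obtain ⟨f, hIf, hSf, hAf⟩ := ih (swp e j k) hI' (by omega)
      exact ⟨f, hIf, hSim.trans hSf, hAf⟩

end Wilf

namespace Wilf
open scoped Classical
variable {n : ℕ}

lemma sim_tail {e f : Fin n → ℕ} (hSim : Sim e f) (i : Fin n)
    (hpre : ∀ m, m < i → e m = f m) :
    (Finset.univ.val.filter (fun m => ¬ m < i ∧ Lw e m)).map e
      = (Finset.univ.val.filter (fun m => ¬ m < i ∧ Lw f m)).map f := by
  set s : Multiset (Fin n) := Finset.univ.val with hs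
  have split : ∀ g : Fin n → ℕ, (s.filter (Lw g)).map g
      = (s.filter (fun m => m < i ∧ Lw g m)).map g
        + (s.filter (fun m => ¬ m < i ∧ Lw g m)).map g := by
    intro g
    rw [← Multiset.map_add]
    congr 1
    rw [← Multiset.filter_filter, ← Multiset.filter_filter]
    exact (Multiset.filter_add_not _ _).symm
  have hlow : (s.filter (Lw e)).map e = (s.filter (Lw f)).map f := hSim.2.2
  rw [split e, split f] at hlow
  have hpref : (s.filter (fun m => m < i ∧ Lw e m)).map e
      = (s.filter (fun m => m < i ∧ Lw f m)).map f := by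
    rw [show s.filter (fun m => m < i ∧ Lw e m) = s.filter (fun m => m < i ∧ Lw f m) from
      Multiset.filter_congr (fun m _ => by rw [hSim.1 m])]
    exact Multiset.map_congr rfl
      (fun m hm => hpre m (Multiset.mem_filter.mp hm).2.1)
  rw [hpref] at hlow
  exact add_left_cancel hlow

lemma uniq_aux_201 {e f : Fin n → ℕ} (hSim : Sim e f) (i : Fin n)
    (hpre : ∀ m, m < i → e m = f m) (hlt : e i < f i)
    (hA : Avoids e [2,0,1]) : False := by
  have hLe : Lw e i := by
    by_contra h
    have := hSim.2.1 i h
    omega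
  have hLf : Lw f i := (hSim.1 i).mp hLe
  obtain ⟨i0, hi0i, hfi⟩ := (hSim.1 i).mp hLe
  have htail := sim_tail hSim i hpre
  have hmem : f i ∈ (Finset.univ.val.filter (fun m => ¬ m < i ∧ Lw f m)).map f :=
    Multiset.mem_map.mpr ⟨i, Multiset.mem_filter.mpr ⟨Finset.mem_univ i, lt_irrefl i, hLf⟩, rfl⟩
  rw [← htail] at hmem
  obtain ⟨k, hk, hek⟩ := Multiset.mem_map.mp hmem
  obtain ⟨-, hki, hLk⟩ := Multiset.mem_filter.mp hk
  have hik : i < k := by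
    rcases lt_or_eq_of_le (not_lt.mp hki) with h | h
    · exact h
    · exfalso; rw [← h] at hek; omega
  apply hA
  rw [contains_201]
  refine ⟨i0, i, k, hi0i, hik, by omega, ?_⟩
  have := hpre i0 hi0i
  omega

lemma uniq_aux_210 {e f : Fin n → ℕ} (hSim : Sim e f) (i : Fin n)
    (hpre : ∀ m, m < i → e m = f m) (hlt : e i < f i)
    (hA : Avoids f [2,1,0]) : False := by
  have hLe : Lw e i := by
    by_contra h
    have := hSim.2.1 i h
    omega
  obtain ⟨i0, hi0i, hfi⟩ := (hSim.1 i).mp hLe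
  have htail := sim_tail hSim i hpre
  have hmem : e i ∈ (Finset.univ.val.filter (fun m => ¬ m < i ∧ Lw e m)).map e :=
    Multiset.mem_map.mpr ⟨i, Multiset.mem_filter.mpr ⟨Finset.mem_univ i, lt_irrefl i, hLe⟩, rfl⟩
  rw [htail] at hmem
  obtain ⟨k, hk, hek⟩ := Multiset.mem_map.mp hmem
  obtain ⟨-, hki, hLk⟩ := Multiset.mem_filter.mp hk
  have hik : i < k := by
    rcases lt_or_eq_of_le (not_lt.mp hki) with h | h
    · exact h
    · exfalso; rw [← h] at hek; omega
  apply hA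
  rw [contains_210]
  exact ⟨i0, i, k, hi0i, hik, by omega, hfi⟩

lemma min_diff {e f : Fin n → ℕ} (hne : e ≠ f) :
    ∃ i : Fin n, e i ≠ f i ∧ ∀ m, m < i → e m = f m := by
  have hD : (Finset.univ.filter (fun i => e i ≠ f i)).Nonempty := by
    by_contra h
    rw [Finset.not_nonempty_iff_eq_empty] at h
    apply hne
    funext x
    by_contra hx
    have : x ∈ Finset.univ.filter (fun i => e i ≠ f i) := Finset.mem_filter.mpr ⟨Finset.mem_univ x, hx⟩
    rw [h] at this
    exact absurd this (Finset.notMem_empty x)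
  set i := (Finset.univ.filter (fun i => e i ≠ f i)).min' hD with hi
  refine ⟨i, (Finset.mem_filter.mp ((Finset.univ.filter (fun i => e i ≠ f i)).min'_mem hD)).2, ?_⟩
  intro m hm
  by_contra hc
  have : i ≤ m := Finset.min'_le _ m (Finset.mem_filter.mpr ⟨Finset.mem_univ m, hc⟩)
  exact absurd hm (not_lt.mpr this)

lemma sim_uniq_201 {e f : Fin n → ℕ} (hAe : Avoids e [2,0,1]) (hAf : Avoids f [2,0,1])
    (hSim : Sim e f) : e = f := by
  by_contra hne
  obtain ⟨i, hnei, hpre⟩ := min_diff hne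
  rcases Nat.lt_or_ge (e i) (f i) with h | h
  · exact uniq_aux_201 hSim i hpre h hAe
  · exact uniq_aux_201 hSim.symm i (fun m hm => (hpre m hm).symm) (by omega) hAf

lemma sim_uniq_210 {e f : Fin n → ℕ} (hAe : Avoids e [2,1,0]) (hAf : Avoids f [2,1,0])
    (hSim : Sim e f) : e = f := by
  by_contra hne
  obtain ⟨i, hnei, hpre⟩ := min_diff hne
  rcases Nat.lt_or_ge (e i) (f i) with h | h
  · exact uniq_aux_210 hSim i hpre h hAf
  · exact uniq_aux_210 hSim.symm i (fun m hm => (hpre m hm).symm) (by omega) hAe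

end Wilf

namespace Wilf
open scoped Classical
variable {n : ℕ}

lemma sim_avoids_011 {e f : Fin n → ℕ} (hIe : InvSeq e) (hIf : InvSeq f) (hSim : Sim e f) :
    Avoids e [0,1,1] ↔ Avoids f [0,1,1] := by
  rw [Avoids, Avoids, char_011 e hIe, char_011 f hIf, hSim.valM_eq]

lemma sim_avoids_000 {e f : Fin n → ℕ} (hSim : Sim e f) :
    Avoids e [0,0,0] ↔ Avoids f [0,0,0] := by
  rw [Avoids, Avoids, char_000 e, char_000 f, hSim.valM_eq]

theorem card_eq_12 (p : List ℕ)
    (hinv : ∀ e f : Fin n → ℕ, InvSeq e → InvSeq f → Sim e f → (Avoids e p → Avoids f p)) :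
    Nat.card {e : Fin n → ℕ // InvSeq e ∧ Avoids e p ∧ Avoids e [2,0,1]}
      = Nat.card {e : Fin n → ℕ // InvSeq e ∧ Avoids e p ∧ Avoids e [2,1,0]} := by
  apply Nat.card_congr
  refine ⟨fun x => ⟨(exists_sim_avoid210 x.1 x.2.1).choose, ?_⟩,
          fun y => ⟨(exists_sim_avoid201 y.1 y.2.1).choose, ?_⟩, ?_, ?_⟩
  · obtain ⟨hIf, hSf, hAf⟩ := (exists_sim_avoid210 x.1 x.2.1).choose_spec
    exact ⟨hIf, hinv _ _ x.2.1 hIf hSf x.2.2.1, hAf⟩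
  · obtain ⟨hIf, hSf, hAf⟩ := (exists_sim_avoid201 y.1 y.2.1).choose_spec
    exact ⟨hIf, hinv _ _ y.2.1 hIf hSf y.2.2.1, hAf⟩
  · intro x
    apply Subtype.ext
    obtain ⟨hI1, hS1, hA1⟩ := (exists_sim_avoid210 x.1 x.2.1).choose_spec
    obtain ⟨hI2, hS2, hA2⟩ :=
      (exists_sim_avoid201 (exists_sim_avoid210 x.1 x.2.1).choose hI1).choose_spec
    exact sim_uniq_201 hA2 x.2.2.2 ((hS1.trans hS2).symm)
  · intro y
    apply Subtype.ext
    obtain ⟨hI1, hS1, hA1⟩ := (exists_sim_avoid201 y.1 y.2.1).choose_spec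
    obtain ⟨hI2, hS2, hA2⟩ :=
      (exists_sim_avoid210 (exists_sim_avoid201 y.1 y.2.1).choose hI1).choose_spec
    exact sim_uniq_210 hA2 y.2.2.2 ((hS1.trans hS2).symm)

end Wilf

namespace Wilf
open scoped Classical
variable {n : ℕ}

/-- Running maximum of `f` strictly before position `i`. -/
noncomputable def Mx (f : Fin n → ℕ) (i : Fin n) : ℕ := (Finset.Iio i).sup f

lemma le_Mx {f : Fin n → ℕ} {j i : Fin n} (h : j < i) : f j ≤ Mx f i :=
  Finset.le_sup (Finset.mem_Iio.mpr h)

lemma Mx_mono {f : Fin n → ℕ} {i j : Fin n} (h : i ≤ j) : Mx f i ≤ Mx f j :=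
  Finset.sup_mono (Finset.Iio_subset_Iio h)

lemma Mx_le_pos {f : Fin n → ℕ} (hI : InvSeq f) (i : Fin n) : Mx f i ≤ (i : ℕ) :=
  Finset.sup_le fun j hj => (hI j).trans (le_of_lt (Fin.lt_iff_val_lt_val.mp (Finset.mem_Iio.mp hj)))

lemma Mx_mono_fun {f g : Fin n → ℕ} (h : ∀ m, f m ≤ g m) (i : Fin n) : Mx f i ≤ Mx g i :=
  Finset.sup_mono_fun fun j _ => h j

lemma exists_attain {f : Fin n → ℕ} {i : Fin n} (h : Mx f i ≠ 0) :
    ∃ m, m < i ∧ f m = Mx f i ∧ ∀ m', m' < m → f m' < f m := by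
  have hne : (Finset.Iio i).Nonempty := by
    by_contra hc
    rw [Finset.not_nonempty_iff_eq_empty] at hc
    rw [Mx, hc, Finset.sup_empty] at h
    exact h rfl
  set S := (Finset.Iio i).filter (fun m => f m = Mx f i) with hS
  have hSne : S.Nonempty := by
    obtain ⟨b, hb, hfb⟩ := Finset.exists_mem_eq_sup _ hne f
    exact ⟨b, Finset.mem_filter.mpr ⟨hb, hfb.symm⟩⟩
  set m := S.min' hSne with hm
  have hmS : m ∈ S := S.min'_mem hSne
  obtain ⟨hmi, hfm⟩ := Finset.mem_filter.mp hmS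
  refine ⟨m, Finset.mem_Iio.mp hmi, hfm, ?_⟩
  intro m' hm'
  have hm'i : m' < i := hm'.trans (Finset.mem_Iio.mp hmi)
  have hle : f m' ≤ Mx f i := le_Mx hm'i
  rcases Nat.lt_or_ge (f m') (f m) with h' | h'
  · exact h'
  · exfalso
    have : f m' = Mx f i := le_antisymm hle (by omega)
    have : m' ∈ S := Finset.mem_filter.mpr ⟨Finset.mem_Iio.mpr hm'i, this⟩
    have := S.min'_le m' this
    exact absurd hm' (not_lt.mpr this)

/-- A "bad" entry: repeats an earlier value and has a strictly smaller later entry. -/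
def Bd (e : Fin n → ℕ) (i : Fin n) : Prop :=
  (∃ j, j < i ∧ e j = e i) ∧ (∃ k, i < k ∧ e k < e i)

/-- Zero out bad entries. -/
noncomputable def g3 (e : Fin n → ℕ) : Fin n → ℕ := fun i => if Bd e i then 0 else e i

/-- A "restorable zero". -/
def RZ (f : Fin n → ℕ) (i : Fin n) : Prop :=
  f i = 0 ∧ (∃ j, j < i ∧ 0 < f j) ∧ (∃ k, i < k ∧ f k < Mx f i)

/-- Restore restorable zeros to the running max. -/
noncomputable def h3 (f : Fin n → ℕ) : Fin n → ℕ := fun i => if RZ f i then Mx f i else f i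

lemma g3_le (e : Fin n → ℕ) (i : Fin n) : g3 e i ≤ e i := by
  rw [g3]; split <;> omega

lemma le_h3 (f : Fin n → ℕ) (i : Fin n) : f i ≤ h3 f i := by
  rw [h3]; split <;> simp_all [RZ]

lemma Mx_g3 (e : Fin n → ℕ) (i : Fin n) : Mx (g3 e) i = Mx e i := by
  refine le_antisymm (Mx_mono_fun (g3_le e) i) ?_
  rcases Nat.eq_zero_or_pos (Mx e i) with h0 | h0
  · omega
  · obtain ⟨m, hmi, hfm, hleast⟩ := exists_attain (by omega : Mx e i ≠ 0)
    have hnb : ¬ Bd e m := by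
      rintro ⟨⟨j, hj, hej⟩, -⟩
      have := hleast j hj
      omega
    have : g3 e m = e m := by rw [g3, if_neg hnb]
    calc Mx e i = g3 e m := by omega
    _ ≤ Mx (g3 e) i := le_Mx hmi

lemma Mx_h3 (f : Fin n → ℕ) (i : Fin n) : Mx (h3 f) i = Mx f i := by
  refine le_antisymm ?_ (Mx_mono_fun (le_h3 f) i)
  apply Finset.sup_le
  intro m hm
  have hmi : m < i := Finset.mem_Iio.mp hm
  rw [h3]
  split
  · exact Mx_mono (le_of_lt hmi)
  · exact le_Mx hmi

end Wilf

namespace Wilf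
open scoped Classical
variable {n : ℕ}

lemma zero_pos {e : Fin n → ℕ} (hI : InvSeq e) (i : Fin n) :
    ∃ z : Fin n, e z = 0 ∧ ∀ m : Fin n, e m ≠ 0 → z < m := by
  refine ⟨⟨0, i.pos⟩, le_antisymm (hI _) (Nat.zero_le _), ?_⟩
  intro m hm
  rw [Fin.lt_def]
  rcases Nat.eq_zero_or_pos m.val with h0 | h0
  · exfalso
    apply hm
    have : m = ⟨0, i.pos⟩ := Fin.ext (by simp [h0])
    rw [this]
    exact le_antisymm (hI _) (Nat.zero_le _)
  · exact h0

lemma g3_pos {e : Fin n → ℕ} {i : Fin n} (h : 0 < g3 e i) : ¬ Bd e i ∧ g3 e i = e i := by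
  rw [g3] at h ⊢
  split at h
  · omega
  · next hb => exact ⟨hb, by rw [if_neg hb]⟩

lemma h3_rz {f : Fin n → ℕ} {i : Fin n} (h : RZ f i) : h3 f i = Mx f i := by
  rw [h3, if_pos h]

lemma h3_nrz {f : Fin n → ℕ} {i : Fin n} (h : ¬ RZ f i) : h3 f i = f i := by
  rw [h3, if_neg h]

/-- Bad entries sit at the running max. -/
lemma Bd_eq_Mx {e : Fin n → ℕ} {i : Fin n} (hI : InvSeq e) (h021 : Avoids e [0,2,1])
    (hB : Bd e i) : e i = Mx e i := by
  obtain ⟨⟨j0, hj0, hej0⟩, ⟨k0, hk0, hek0⟩⟩ := hB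
  have hle : e i ≤ Mx e i := hej0 ▸ le_Mx hj0
  rcases Nat.lt_or_ge (e i) (Mx e i) with hlt | hge
  · exfalso
    obtain ⟨m, hmi, hem, -⟩ := exists_attain (by omega : Mx e i ≠ 0)
    obtain ⟨z, hz, hzlt⟩ := zero_pos hI i
    apply h021
    rw [contains_021]
    exact ⟨z, m, i, hzlt m (by omega), hmi, by omega, by omega⟩
  · omega

section Pair3
variable {e f : Fin n → ℕ}

/-- (A2) `g3 e` avoids 021. -/
lemma g3_avoids_021 (hI : InvSeq e) (h021 : Avoids e [0,2,1]) :
    Avoids (g3 e) [0,2,1] := by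
  intro hC
  rw [contains_021] at hC
  obtain ⟨i, j, k, hij, hjk, h1, h2⟩ := hC
  -- g3 e i < g3 e k < g3 e j
  have hk1 : 0 < g3 e k := by omega
  have hj1 : 0 < g3 e j := by omega
  obtain ⟨hnbk, hgk⟩ := g3_pos hk1
  obtain ⟨hnbj, hgj⟩ := g3_pos hj1
  by_cases hbi : Bd e i
  · obtain ⟨z, hz, hzlt⟩ := zero_pos hI i
    apply h021
    rw [contains_021]
    exact ⟨z, j, k, hzlt j (by omega), hjk, by omega, by omega⟩
  · have hgi : g3 e i = e i := by rw [g3, if_neg hbi]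
    apply h021
    rw [contains_021]
    exact ⟨i, j, k, hij, hjk, by omega, by omega⟩

/-- (A3) `g3 e` avoids 110. -/
lemma g3_avoids_110 (hI : InvSeq e) (h100 : Avoids e [1,0,0]) (h021 : Avoids e [0,2,1]) :
    Avoids (g3 e) [1,1,0] := by
  intro hC
  rw [contains_110] at hC
  obtain ⟨i, j, k, hij, hjk, h1, h2⟩ := hC
  -- g3 e i = g3 e j =: v > g3 e k
  have hj1 : 0 < g3 e j := by omega
  have hi1 : 0 < g3 e i := by omega
  obtain ⟨hnbj, hgj⟩ := g3_pos hj1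
  obtain ⟨hnbi, hgi⟩ := g3_pos hi1
  set v := e j with hv
  have heiv : e i = v := by omega
  have hnm : ¬ ∃ m, j < m ∧ e m < v := by
    intro ⟨m, hm, hem⟩
    exact hnbj ⟨⟨i, hij, heiv⟩, ⟨m, hm, hem⟩⟩
  rcases Nat.lt_or_ge (e k) v with hek | hek
  · exact hnm ⟨k, hjk, hek⟩
  · -- e k ≥ v > g3 e k, so Bd k
    have hbk : Bd e k := by
      by_contra hc
      rw [g3, if_neg hc] at h2
      omega
    obtain ⟨⟨j1, hj1k, hej1⟩, ⟨k1, hk1, hek1⟩⟩ := hbk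
    rcases Nat.lt_or_ge (e k1) v with hv1 | hv1
    · exact hnm ⟨k1, hjk.trans hk1, hv1⟩
    · -- v ≤ e k1 < e k, so e k > v; 021 at (z, j1, k1)
      obtain ⟨z, hz, hzlt⟩ := zero_pos hI i
      apply h021
      rw [contains_021]
      refine ⟨z, j1, k1, hzlt j1 (by omega), hj1k.trans hk1, by omega, by omega⟩

/-- (B) `h3` inverts `g3` on the class `E`. -/
lemma h3_g3 (hI : InvSeq e) (h100 : Avoids e [1,0,0]) (h021 : Avoids e [0,2,1]) :
    h3 (g3 e) = e := by
  funext i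
  set f := g3 e with hf
  by_cases hbi : Bd e i
  · -- f i = 0 and we must restore
    have hfi : f i = 0 := by rw [hf, g3, if_pos hbi]
    have hMe : e i = Mx e i := Bd_eq_Mx hI h021 hbi
    have hMf : Mx f i = Mx e i := Mx_g3 e i
    obtain ⟨⟨j0, hj0, hej0⟩, ⟨k0, hk0, hek0⟩⟩ := hbi
    have hv1 : 1 ≤ e i := by omega
    have hrz : RZ f i := by
      refine ⟨hfi, ?_, ?_⟩
      · obtain ⟨m, hmi, hem, hleast⟩ := exists_attain (show Mx e i ≠ 0 by omega)
        have hnb : ¬ Bd e m := by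
          rintro ⟨⟨j, hj, hej⟩, -⟩
          have := hleast j hj
          omega
        refine ⟨m, hmi, ?_⟩
        rw [hf, g3, if_neg hnb]
        omega
      · refine ⟨k0, hk0, ?_⟩
        have hle : f k0 ≤ e k0 := g3_le e k0
        omega
    rw [h3_rz hrz]
    omega
  · have hfi : f i = e i := by rw [hf, g3, if_neg hbi]
    have hMf : Mx f i = Mx e i := Mx_g3 e i
    by_cases hrz : RZ f i
    · exfalso
      obtain ⟨hfi0, ⟨j, hj, hfj⟩, ⟨k, hk, hfk⟩⟩ := hrz
      set W := Mx e i with hW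
      have hW1 : 1 ≤ W := by
        have := g3_le e j
        have : e j ≤ W := le_Mx hj
        omega
      obtain ⟨m0, hm0, hem0, hleast⟩ := exists_attain (show Mx e i ≠ 0 by omega)
      have hnb0 : ¬ Bd e m0 := by
        rintro ⟨⟨j', hj', hej'⟩, -⟩
        have := hleast j' hj'
        omega
      have hfm0 : f m0 = e m0 := by rw [hf, g3, if_neg hnb0]
      obtain ⟨z, hz, hzlt⟩ := zero_pos hI i
      by_cases hbk : Bd e k
      · obtain ⟨⟨j1, hj1, hej1⟩, ⟨k1, hk1, hek1⟩⟩ := hbk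
        rcases Nat.lt_or_ge (e k) W with hekW | hekW
        · rcases Nat.eq_zero_or_pos (e k) with h0 | h0
          · omega  -- e k = 0 but Bd k gives e k1 < e k, impossible
          · apply h021; rw [contains_021]
            exact ⟨z, m0, k, hzlt m0 (by omega), hm0.trans hk, by omega, by omega⟩
        · rcases Nat.eq_zero_or_pos (e k1) with h0 | h0
          · apply h100; rw [contains_100]
            exact ⟨m0, i, k1, hm0, hk.trans hk1, by omega, by omega⟩
          · apply h021; rw [contains_021]
            exact ⟨i, k, k1, hk, hk1, by omega, by omega⟩
      · have hfk' : f k = e k := by rw [hf, g3, if_neg hbk]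
        rcases Nat.eq_zero_or_pos (e k) with h0 | h0
        · apply h100; rw [contains_100]
          exact ⟨m0, i, k, hm0, hk, by omega, by omega⟩
        · apply h021; rw [contains_021]
          exact ⟨z, m0, k, hzlt m0 (by omega), hm0.trans hk, by omega, by omega⟩
    · rw [h3_nrz hrz, hfi]

end Pair3
end Wilf

namespace Wilf
open scoped Classical
variable {n : ℕ}

section Pair3b
variable {f : Fin n → ℕ}

lemma h3_invSeq (hI : InvSeq f) : InvSeq (h3 f) := by
  intro i
  by_cases h : RZ f i
  · rw [h3_rz h]; exact Mx_le_pos hI i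
  · rw [h3_nrz h]; exact hI i

/-- (C2) `h3 f` avoids 021. -/
lemma h3_avoids_021 (hI : InvSeq f) (h021 : Avoids f [0,2,1]) :
    Avoids (h3 f) [0,2,1] := by
  intro hC
  rw [contains_021] at hC
  obtain ⟨i, j, k, hij, hjk, h1, h2⟩ := hC
  set e := h3 f with he
  obtain ⟨z, hz, hzlt⟩ := zero_pos hI i
  by_cases hrj : RZ f j
  · have hej : e j = Mx f j := h3_rz hrj
    by_cases hrk : RZ f k
    · have hek : e k = Mx f k := h3_rz hrk
      have : Mx f j ≤ Mx f k := Mx_mono (le_of_lt hjk)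
      omega
    · have hek : e k = f k := h3_nrz hrk
      -- 1 ≤ f k < Mx f j
      have hk1 : 1 ≤ f k := by omega
      obtain ⟨m0, hm0, hfm0, -⟩ := exists_attain (show Mx f j ≠ 0 by omega)
      apply h021
      rw [contains_021]
      exact ⟨z, m0, k, hzlt m0 (by omega), hm0.trans hjk, by omega, by omega⟩
  · have hej : e j = f j := h3_nrz hrj
    by_cases hrk : RZ f k
    · have hek : e k = Mx f k := h3_rz hrk
      have : f j ≤ Mx f k := le_Mx hjk
      omega
    · have hek : e k = f k := h3_nrz hrk
      by_cases hri : RZ f i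
      · have hei : e i = Mx f i := h3_rz hri
        obtain ⟨-, ⟨j', hj', hfj'⟩, -⟩ := hri
        have hMi1 : 1 ≤ Mx f i := by
          have : f j' ≤ Mx f i := le_Mx hj'
          omega
        obtain ⟨m0, hm0, hfm0, -⟩ := exists_attain (show Mx f i ≠ 0 by omega)
        apply h021
        rw [contains_021]
        exact ⟨m0, j, k, hm0.trans hij, hjk, by omega, by omega⟩
      · have hei : e i = f i := h3_nrz hri
        apply h021
        rw [contains_021]
        exact ⟨i, j, k, hij, hjk, by omega, by omega⟩

/-- (C3) `h3 f` avoids 100. -/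
lemma h3_avoids_100 (hI : InvSeq f) (h110 : Avoids f [1,1,0]) (h021 : Avoids f [0,2,1]) :
    Avoids (h3 f) [1,0,0] := by
  intro hC
  rw [contains_100] at hC
  obtain ⟨i, j, k, hij, hjk, h1, h2⟩ := hC
  set e := h3 f with he
  obtain ⟨z, hz, hzlt⟩ := zero_pos hI i
  have hik : i < k := hij.trans hjk
  -- e i ≤ Mx f k and e i ≤ Mx f j in all cases
  have hei_le : ∀ m : Fin n, i < m → e i ≤ Mx f m := by
    intro m him
    by_cases hri : RZ f i
    · rw [he, h3_rz hri]; exact Mx_mono (le_of_lt him)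
    · rw [he, h3_nrz hri]; exact le_Mx him
  by_cases hrk : RZ f k
  · have hek : e k = Mx f k := h3_rz hrk
    have := hei_le k hik
    omega
  · have hek : e k = f k := h3_nrz hrk
    by_cases hrj : RZ f j
    · have hej : e j = Mx f j := h3_rz hrj
      have := hei_le j hij
      omega
    · have hej : e j = f j := h3_nrz hrj
      -- f j = f k =: v, e i > v
      by_cases hri : RZ f i
      · have hei : e i = Mx f i := h3_rz hri
        obtain ⟨-, ⟨j', hj', hfj'⟩, -⟩ := hri
        have hMi1 : 1 ≤ Mx f i := by
          have : f j' ≤ Mx f i := le_Mx hj'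
          omega
        obtain ⟨m0, hm0, hfm0, -⟩ := exists_attain (show Mx f i ≠ 0 by omega)
        rcases Nat.eq_zero_or_pos (f j) with h0 | h0
        · -- v = 0 : then RZ j after all
          apply hrj
          refine ⟨h0, ⟨m0, hm0.trans hij, by omega⟩, ⟨k, hjk, ?_⟩⟩
          have : f m0 ≤ Mx f j := le_Mx (hm0.trans hij)
          omega
        · apply h021
          rw [contains_021]
          exact ⟨z, m0, j, hzlt m0 (by omega), hm0.trans hij, by omega, by omega⟩
      · have hei : e i = f i := h3_nrz hri
        rcases Nat.eq_zero_or_pos (f j) with h0 | h0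
        · apply hrj
          refine ⟨h0, ⟨i, hij, by omega⟩, ⟨k, hjk, ?_⟩⟩
          have : f i ≤ Mx f j := le_Mx hij
          omega
        · apply h021
          rw [contains_021]
          exact ⟨z, i, j, hzlt i (by omega), hij, by omega, by omega⟩

/-- (D) `g3` inverts `h3` on the class `F`. -/
lemma g3_h3 (hI : InvSeq f) (h110 : Avoids f [1,1,0]) (h021 : Avoids f [0,2,1]) :
    g3 (h3 f) = f := by
  funext i
  set e := h3 f with he
  by_cases hri : RZ f i
  · -- e i = Mx f i ≥ 1, f i = 0; need Bd e i
    obtain ⟨hfi0, ⟨j', hj', hfj'⟩, ⟨k1, hk1, hfk1⟩⟩ := hri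
    have hri' : RZ f i := ⟨hfi0, ⟨j', hj', hfj'⟩, ⟨k1, hk1, hfk1⟩⟩
    have hei : e i = Mx f i := h3_rz hri'
    have hMi1 : 1 ≤ Mx f i := by
      have : f j' ≤ Mx f i := le_Mx hj'
      omega
    obtain ⟨m0, hm0, hfm0, -⟩ := exists_attain (show Mx f i ≠ 0 by omega)
    have hnrm0 : ¬ RZ f m0 := fun hr => by rw [hr.1] at hfm0; omega
    have hem0 : e m0 = f m0 := h3_nrz hnrm0
    have hBd : Bd e i := by
      refine ⟨⟨m0, hm0, by omega⟩, ?_⟩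
      -- find k > i with e k < Mx f i, using the maximal element of the set K
      set K := Finset.univ.filter (fun m => i < m ∧ f m < Mx f i) with hK
      have hKne : K.Nonempty := ⟨k1, Finset.mem_filter.mpr ⟨Finset.mem_univ _, hk1, hfk1⟩⟩
      set k := K.max' hKne with hk
      obtain ⟨-, hik0, hfk0⟩ := Finset.mem_filter.mp (K.max'_mem hKne)
      have hik : i < k := hik0
      have hfk : f k < Mx f i := hfk0
      by_cases hrk : RZ f k
      · exfalso
        obtain ⟨hfk0, -, ⟨k2, hk2, hfk2⟩⟩ := hrk
        have hk2K : k2 ∉ K := fun hmem => absurd hk2 (not_lt.mpr (K.le_max' k2 hmem))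
        have hfk2' : Mx f i ≤ f k2 := by
          by_contra hc
          exact hk2K (Finset.mem_filter.mpr ⟨Finset.mem_univ _, hik.trans hk2, by omega⟩)
        -- f k2 < Mx f k =: W, and Mx f i ≤ f k2, so W ≥ 2
        obtain ⟨mW, hmW, hfmW, -⟩ := exists_attain (show Mx f k ≠ 0 by omega)
        obtain ⟨z, hz, hzlt⟩ := zero_pos hI i
        apply h021
        rw [contains_021]
        exact ⟨z, mW, k2, hzlt mW (by omega), hmW.trans hk2, by omega, by omega⟩
      · refine ⟨k, hik, ?_⟩
        have hek : e k = f k := h3_nrz hrk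
        omega
    rw [g3, if_pos hBd]
    omega
  · have hei : e i = f i := h3_nrz hri
    rcases Nat.eq_zero_or_pos (f i) with h0 | h0
    · have : g3 e i ≤ e i := g3_le e i
      omega
    · -- need ¬ Bd e i
      have hnb : ¬ Bd e i := by
        rintro ⟨⟨j0, hj0, hej0⟩, ⟨k0, hk0, hek0⟩⟩
        -- find m < i with f m = f i
        have hv : e j0 = f i := by omega
        have hfk0 : f k0 < f i := by
          have : f k0 ≤ e k0 := le_h3 f k0
          omega
        obtain ⟨m, hm, hfm⟩ : ∃ m, m < i ∧ f m = f i := by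
          by_cases hrj0 : RZ f j0
          · have : e j0 = Mx f j0 := h3_rz hrj0
            obtain ⟨m1, hm1, hfm1, -⟩ := exists_attain (show Mx f j0 ≠ 0 by omega)
            exact ⟨m1, hm1.trans hj0, by omega⟩
          · have : e j0 = f j0 := h3_nrz hrj0
            exact ⟨j0, hj0, by omega⟩
        apply h110
        rw [contains_110]
        exact ⟨m, i, k0, hm, hk0, by omega, by omega⟩
      rw [g3, if_neg hnb]
      omega

end Pair3b
end Wilf

namespace Wilf
open scoped Classical
variable {n : ℕ}

theorem card_eq_3 :
    Nat.card {e : Fin n → ℕ // InvSeq e ∧ Avoids e [1,0,0] ∧ Avoids e [0,2,1]}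
      = Nat.card {e : Fin n → ℕ // InvSeq e ∧ Avoids e [1,1,0] ∧ Avoids e [0,2,1]} := by
  apply Nat.card_congr
  refine ⟨fun x => ⟨g3 x.1, fun i => (g3_le x.1 i).trans (x.2.1 i),
            g3_avoids_110 x.2.1 x.2.2.1 x.2.2.2, g3_avoids_021 x.2.1 x.2.2.2⟩,
          fun y => ⟨h3 y.1, h3_invSeq y.2.1,
            h3_avoids_100 y.2.1 y.2.2.1 y.2.2.2, h3_avoids_021 y.2.1 y.2.2.2⟩, ?_, ?_⟩
  · intro x
    exact Subtype.ext (h3_g3 x.2.1 x.2.2.1 x.2.2.2)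
  · intro y
    exact Subtype.ext (g3_h3 y.2.1 y.2.2.1 y.2.2.2)

end Wilf


theorem stmt_17 (n : ℕ) (hn : 1 ≤ n) :
    (Nat.card {e : Fin n → ℕ // InvSeq e ∧ Avoids e [0,1,1] ∧ Avoids e [2,0,1]}
      = Nat.card {e : Fin n → ℕ // InvSeq e ∧ Avoids e [0,1,1] ∧ Avoids e [2,1,0]}) ∧
    (Nat.card {e : Fin n → ℕ // InvSeq e ∧ Avoids e [0,0,0] ∧ Avoids e [2,0,1]}
      = Nat.card {e : Fin n → ℕ // InvSeq e ∧ Avoids e [0,0,0] ∧ Avoids e [2,1,0]}) ∧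
    (Nat.card {e : Fin n → ℕ // InvSeq e ∧ Avoids e [1,0,0] ∧ Avoids e [0,2,1]}
      = Nat.card {e : Fin n → ℕ // InvSeq e ∧ Avoids e [1,1,0] ∧ Avoids e [0,2,1]}) := by
  refine ⟨?_, ?_, Wilf.card_eq_3⟩
  · exact Wilf.card_eq_12 [0,1,1]
      (fun e f hIe hIf hS hA => (Wilf.sim_avoids_011 hIe hIf hS).mp hA)
  · exact Wilf.card_eq_12 [0,0,0]
      (fun e f hIe hIf hS hA => (Wilf.sim_avoids_000 hS).mp hA)
end

section
/- For every integer n ≥ 1, the number of inversion sequences of length n avoiding both patterns 001 and 100 equals F_{n+2} − 1, where F_m is the m-th Fibonacci number, i.e. |I_n(001,100)| = F_{n+2} − 1. -/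
open Finset

section Patterns

variable {n : ℕ} {e : Fin n → ℕ}

theorem contains_001_iff :
    Contains e [0,0,1] ↔ ∃ a b c : Fin n, a < b ∧ b < c ∧ e a = e b ∧ e b < e c := by
  constructor
  · rintro ⟨s, hs, hrel⟩
    exact ⟨s 0, s 1, s 2, hs (by decide), hs (by decide), (hrel 0 1).2.1 rfl,
      (hrel 1 2).1.1 (by decide)⟩
  · rintro ⟨a, b, c, hab, hbc, h1, h2⟩
    refine ⟨![a, b, c], by simp [hab, hbc], fun i j => ?_⟩
    fin_cases i <;> fin_cases j <;> simp <;> omega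

theorem contains_100_iff :
    Contains e [1,0,0] ↔ ∃ a b c : Fin n, a < b ∧ b < c ∧ e b < e a ∧ e b = e c := by
  constructor
  · rintro ⟨s, hs, hrel⟩
    exact ⟨s 0, s 1, s 2, hs (by decide), hs (by decide), (hrel 1 0).1.1 (by decide),
      (hrel 1 2).2.1 rfl⟩
  · rintro ⟨a, b, c, hab, hbc, h1, h2⟩
    refine ⟨![a, b, c], by simp [hab, hbc], fun i j => ?_⟩
    fin_cases i <;> fin_cases j <;> simp <;> omega

theorem avoids_001_iff :
    Avoids e [0,0,1] ↔ ∀ ⦃a b c : Fin n⦄, a < b → b < c → e a = e b → e c ≤ e b := by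
  simp only [Avoids, contains_001_iff, not_exists, not_and, not_lt]

theorem avoids_100_iff :
    Avoids e [1,0,0] ↔ ∀ ⦃a b c : Fin n⦄, a < b → b < c → e b = e c → e a ≤ e b := by
  simp only [Avoids, contains_100_iff, not_exists, not_and]
  grind

end Patterns

theorem sum_range_sum_range_choose (n : ℕ) :
    ∑ k ∈ range n, ∑ m ∈ range (n - k), k.choose m = Nat.fib (n + 2) - 1 := by
  induction n with
  | zero => simp
  | succ n ih =>
    have diag : ∑ k ∈ range (n + 1), k.choose (n - k) = Nat.fib (n + 1) := by
      rw [Nat.fib_succ_eq_sum_choose, Finset.Nat.sum_antidiagonal_eq_sum_range_succ_mk]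
    have step : ∀ k ∈ range (n + 1), ∑ m ∈ range (n + 1 - k), k.choose m =
        ∑ m ∈ range (n - k), k.choose m + k.choose (n - k) := by
      intro k hk
      rw [Nat.sub_add_comm (Nat.lt_succ_iff.1 (mem_range.1 hk)), sum_range_succ]
    rw [sum_congr rfl step, sum_add_distrib, diag, sum_range_succ, Nat.sub_self, sum_range_zero,
      add_zero, ih]
    have h : Nat.fib (n + 1 + 2) = Nat.fib (n + 1) + Nat.fib (n + 2) := Nat.fib_add_two
    have : 0 < Nat.fib (n + 2) := Nat.fib_pos.2 (by omega)
    omega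

def peakParams (n : ℕ) : Finset (Σ _ : ℕ, Finset ℕ) :=
  (range n).sigma fun k => (range (n - k)).biUnion fun m => powersetCard m (range k)

theorem mem_peakParams {n k : ℕ} {D : Finset ℕ} :
    ⟨k, D⟩ ∈ peakParams n ↔ k < n ∧ D ⊆ range k ∧ #D < n - k := by
  simp only [peakParams, mem_sigma, mem_range, mem_biUnion, mem_powersetCard]
  constructor
  · rintro ⟨hk, m, hm, hD, rfl⟩
    exact ⟨hk, hD, hm⟩
  · rintro ⟨hk, hD, hm⟩
    exact ⟨hk, #D, hm, hD, rfl⟩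

theorem card_peakParams (n : ℕ) : #(peakParams n) = Nat.fib (n + 2) - 1 := by
  rw [peakParams, card_sigma, ← sum_range_sum_range_choose]
  refine sum_congr rfl fun k _ => ?_
  rw [card_biUnion ((pairwise_disjoint_powersetCard _).set_pairwise _)]
  simp only [card_powersetCard, card_range]

theorem Fin.mem_iff_rev_lt_card_of_isUpperSet {n : ℕ} {T : Finset (Fin n)}
    (hT : IsUpperSet (T : Set (Fin n))) (i : Fin n) : i ∈ T ↔ (i.rev : ℕ) < #T := by
  rw [Fin.val_rev]
  constructor
  · intro hi
    have : #(Ici i) ≤ #T := card_le_card fun t ht => hT (mem_Ici.1 ht) hi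
    rw [Fin.card_Ici] at this
    omega
  · intro hlt
    by_contra hi
    have : #T ≤ #(Ioi i) :=
      card_le_card fun t ht => mem_Ioi.2 (lt_of_not_ge fun hti => hi (hT hti ht))
    rw [Fin.card_Ioi] at this
    omega

section Peaked

variable {n : ℕ} {e : Fin n → ℕ}

structure IsPeakedAt (e : Fin n → ℕ) (k : ℕ) : Prop where
  lt : k < n
  eq_self : ∀ i : Fin n, (i : ℕ) ≤ k → e i = i
  le : ∀ i, e i ≤ k
  antitone : ∀ ⦃s t : Fin n⦄, k < (s : ℕ) → s < t → e t ≤ e s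
  eq_of_eq : ∀ ⦃s t : Fin n⦄, k < (s : ℕ) → s < t → e s = e t → e s = k

namespace IsPeakedAt

variable {k : ℕ}

theorem invSeq (h : IsPeakedAt e k) : InvSeq e := fun i => by
  by_cases hi : (i : ℕ) ≤ k
  · exact (h.eq_self i hi).le
  · exact (h.le i).trans (by omega)

theorem avoids_001 (h : IsPeakedAt e k) : Avoids e [0,0,1] := by
  refine avoids_001_iff.2 fun a b c hab hbc heq => ?_
  by_cases hb : (b : ℕ) ≤ k
  · have : (a : ℕ) < b := hab
    rw [h.eq_self a (by omega), h.eq_self b hb] at heq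
    omega
  · exact h.antitone (by omega) hbc

theorem avoids_100 (h : IsPeakedAt e k) : Avoids e [1,0,0] := by
  refine avoids_100_iff.2 fun a b c hab hbc heq => ?_
  by_cases hb : (b : ℕ) ≤ k
  · have : (a : ℕ) < b := hab
    rw [h.eq_self a (by omega), h.eq_self b hb]
    omega
  · rw [h.eq_of_eq (by omega) hbc heq]
    exact h.le a

theorem peak_unique {k' : ℕ} (h : IsPeakedAt e k) (h' : IsPeakedAt e k') : k = k' := by
  have h1 := h.le ⟨k', h'.lt⟩
  have h2 := h'.le ⟨k, h.lt⟩
  rw [h'.eq_self ⟨k', h'.lt⟩ le_rfl] at h1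
  rw [h.eq_self ⟨k, h.lt⟩ le_rfl] at h2
  exact le_antisymm h2 h1

end IsPeakedAt

theorem InvSeq.eq_self_of_lt (hinv : InvSeq e) (h001 : Avoids e [0,0,1]) {s t : Fin n}
    (hst : s < t) (ht : e t = t) : e s = s := by
  by_contra hs
  have hmaps : ∀ i ∈ Iic s, e i ∈ range s := fun i hi => by
    have := hinv i
    rcases (mem_Iic.1 hi).lt_or_eq with hlt | rfl
    · exact mem_range.2 (by have : (i : ℕ) < s := hlt; omega)
    · exact mem_range.2 (lt_of_le_of_ne (hinv i) hs)
  have hcard : #(range s) < #(Iic s) := by rw [card_range, Fin.card_Iic]; omega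
  obtain ⟨a, ha, b, hb, hab, heq⟩ := exists_ne_map_eq_of_card_lt_of_maps_to hcard hmaps
  wlog hlt : a < b generalizing a b
  · exact this b hb a ha hab.symm heq.symm (lt_of_le_of_ne (not_lt.1 hlt) hab.symm)
  have := avoids_001_iff.1 h001 hlt ((mem_Iic.1 hb).trans_lt hst) heq
  have := mem_range.1 (hmaps b hb)
  have : (s : ℕ) < t := hst
  omega

theorem exists_last_saturated (hn : 1 ≤ n) (hinv : InvSeq e) :
    ∃ k : Fin n, e k = k ∧ ∀ t, k < t → e t ≠ t := by
  obtain ⟨k, hk, hmax⟩ := (univ.filter fun i : Fin n => e i = i).exists_max_image id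
    ⟨⟨0, hn⟩, mem_filter.2 ⟨mem_univ _, Nat.le_zero.1 (hinv _)⟩⟩
  exact ⟨k, (mem_filter.1 hk).2,
    fun t hkt ht => (hmax t (mem_filter.2 ⟨mem_univ _, ht⟩)).not_gt hkt⟩

theorem isPeakedAt_of_avoids (hinv : InvSeq e) (h001 : Avoids e [0,0,1])
    (h100 : Avoids e [1,0,0]) {k : Fin n} (hk : e k = k) (hmax : ∀ t, k < t → e t ≠ t) :
    IsPeakedAt e k := by
  have eq_self : ∀ i : Fin n, (i : ℕ) ≤ k → e i = i := fun i hi =>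
    (Fin.le_def.2 hi).lt_or_eq.elim (fun hlt => hinv.eq_self_of_lt h001 hlt hk) (· ▸ hk)
  -- the value `e s ≤ k` already occurs at position `e s` of the identity prefix
  have bound : ∀ ⦃s t : Fin n⦄, e s ≤ k → e s < s → s < t → e t ≤ e s := fun s t hsk hs hst =>
    avoids_001_iff.1 h001 (show (⟨e s, by omega⟩ : Fin n) < s from hs) hst (eq_self _ hsk)
  have le : ∀ t, e t ≤ k := fun t => by
    by_contra! hgt
    have ht := hinv t
    obtain ⟨u, hu⟩ : ∃ u : Fin n, (u : ℕ) = k + 1 := ⟨⟨k + 1, by omega⟩, rfl⟩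
    have heu : e u ≤ k := by
      have := hinv u
      have := hmax u (Fin.lt_def.2 (by omega))
      omega
    rcases (Fin.le_def.2 (by omega) : u ≤ t).lt_or_eq with hut | rfl
    · have := bound heu (by omega) hut
      omega
    · omega
  refine ⟨k.isLt, eq_self, le, fun s t hks hst => bound (le s) (by have := le s; omega) hst,
    fun s t hks hst heq => ?_⟩
  have := avoids_100_iff.1 h100 (show k < s from hks) hst heq
  have := le s
  omega

-- The last `#D` entries, counted from the right by `i.rev`, list `D` in decreasing order.
def peakedSeq (n k : ℕ) (D : Finset ℕ) (i : Fin n) : ℕ :=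
  if (i : ℕ) ≤ k then i else if h : (i.rev : ℕ) < #D then D.orderEmbOfFin rfl ⟨i.rev, h⟩ else k

def tailPositions (e : Fin n → ℕ) (k : ℕ) : Finset (Fin n) :=
  univ.filter fun i => k < (i : ℕ) ∧ e i < k

def tailValues (e : Fin n → ℕ) (k : ℕ) : Finset ℕ :=
  (tailPositions e k).image e

theorem tailValues_subset_range (e : Fin n → ℕ) (k : ℕ) : tailValues e k ⊆ range k :=
  fun v hv => by
    obtain ⟨i, hi, rfl⟩ := mem_image.1 hv
    exact mem_range.2 (mem_filter.1 hi).2.2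

section PeakedSeq

variable {k : ℕ} {D : Finset ℕ} {i : Fin n}

theorem peakedSeq_of_le (hi : (i : ℕ) ≤ k) : peakedSeq n k D i = i := by
  simp [peakedSeq, hi]

theorem peakedSeq_of_rev_lt (hi : k < (i : ℕ)) (h : (i.rev : ℕ) < #D) :
    peakedSeq n k D i = D.orderEmbOfFin rfl ⟨i.rev, h⟩ := by
  rw [peakedSeq, if_neg hi.not_ge, dif_pos h]

theorem peakedSeq_of_card_le (hi : k < (i : ℕ)) (h : #D ≤ i.rev) : peakedSeq n k D i = k := by
  rw [peakedSeq, if_neg hi.not_ge, dif_neg h.not_gt]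

theorem peakedSeq_le (hD : D ⊆ range k) (i : Fin n) : peakedSeq n k D i ≤ k := by
  rcases le_or_gt (i : ℕ) k with hi | hi
  · rwa [peakedSeq_of_le hi]
  rcases lt_or_ge (i.rev : ℕ) #D with h | h
  · rw [peakedSeq_of_rev_lt hi h]
    exact (mem_range.1 (hD (orderEmbOfFin_mem _ _ _))).le
  · rw [peakedSeq_of_card_le hi h]

theorem peakedSeq_lt_peakedSeq {s t : Fin n} (hs : k < (s : ℕ)) (hst : s < t)
    (h : (s.rev : ℕ) < #D) : peakedSeq n k D t < peakedSeq n k D s := by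
  have hrev : (t.rev : ℕ) < s.rev := Fin.rev_lt_rev.2 hst
  rw [peakedSeq_of_rev_lt hs h, peakedSeq_of_rev_lt (hs.trans hst) (hrev.trans h)]
  exact (D.orderEmbOfFin rfl).strictMono hrev

theorem isPeakedAt_peakedSeq (hk : k < n) (hD : D ⊆ range k) :
    IsPeakedAt (peakedSeq n k D) k where
  lt := hk
  eq_self _ := peakedSeq_of_le
  le := peakedSeq_le hD
  antitone s t hs hst := by
    rcases lt_or_ge (s.rev : ℕ) #D with h | h
    · exact (peakedSeq_lt_peakedSeq hs hst h).le
    · rw [peakedSeq_of_card_le hs h]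
      exact peakedSeq_le hD t
  eq_of_eq s t hs hst heq := by
    rcases lt_or_ge (s.rev : ℕ) #D with h | h
    · exact absurd heq (peakedSeq_lt_peakedSeq hs hst h).ne'
    · exact peakedSeq_of_card_le hs h

theorem tailValues_peakedSeq (hD : D ⊆ range k) (hDn : #D < n - k) :
    tailValues (peakedSeq n k D) k = D := by
  ext v
  simp only [tailValues, tailPositions, mem_image, mem_filter, mem_univ, true_and]
  constructor
  · rintro ⟨i, ⟨hi, hlt⟩, rfl⟩
    rcases lt_or_ge (i.rev : ℕ) #D with h | h
    · rw [peakedSeq_of_rev_lt hi h]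
      exact orderEmbOfFin_mem _ _ _
    · exact absurd (peakedSeq_of_card_le hi h) hlt.ne
  · intro hv
    obtain ⟨r, rfl⟩ : v ∈ Set.range (D.orderEmbOfFin rfl) := by rwa [range_orderEmbOfFin]
    obtain ⟨i, hir⟩ : ∃ i : Fin n, (i.rev : ℕ) = r := ⟨Fin.rev ⟨r, by omega⟩, by simp⟩
    have hi : k < (i : ℕ) := by
      rw [Fin.val_rev] at hir
      omega
    have hval : peakedSeq n k D i = D.orderEmbOfFin rfl r := by
      rw [peakedSeq_of_rev_lt hi (hir ▸ r.isLt)]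
      exact congrArg _ (Fin.ext hir)
    refine ⟨i, ⟨hi, ?_⟩, hval⟩
    rw [hval]
    exact mem_range.1 (hD (orderEmbOfFin_mem _ _ _))

end PeakedSeq

namespace IsPeakedAt

variable {k : ℕ}

theorem isUpperSet_tailPositions (h : IsPeakedAt e k) :
    IsUpperSet (tailPositions e k : Set (Fin n)) := fun s t hst hs => by
  simp only [tailPositions, coe_filter, mem_univ, true_and, Set.mem_ofPred_eq] at hs ⊢
  rcases hst.lt_or_eq with hst | rfl
  · exact ⟨hs.1.trans hst, (h.antitone hs.1 hst).trans_lt hs.2⟩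
  · exact hs

theorem strictAntiOn_tailPositions (h : IsPeakedAt e k) :
    StrictAntiOn e (tailPositions e k : Set (Fin n)) := fun s hs t ht hst => by
  simp only [tailPositions, coe_filter, mem_univ, true_and, Set.mem_ofPred_eq] at hs ht
  refine (h.antitone hs.1 hst).lt_of_ne fun heq => ?_
  exact hs.2.ne (h.eq_of_eq hs.1 hst heq.symm)

theorem card_tailValues (h : IsPeakedAt e k) : #(tailValues e k) = #(tailPositions e k) :=
  card_image_of_injOn h.strictAntiOn_tailPositions.injOn

theorem card_tailValues_lt (h : IsPeakedAt e k) : #(tailValues e k) < n - k := by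
  have : tailPositions e k ⊆ Ioi ⟨k, h.lt⟩ := fun i hi => by
    simp only [tailPositions, mem_filter] at hi
    exact mem_Ioi.2 (Fin.lt_def.2 hi.2.1)
  have := card_le_card this
  rw [Fin.card_Ioi, Fin.val_mk] at this
  rw [h.card_tailValues]
  have := h.lt
  omega

theorem eq_peakedSeq (h : IsPeakedAt e k) : e = peakedSeq n k (tailValues e k) := by
  have hmem := Fin.mem_iff_rev_lt_card_of_isUpperSet h.isUpperSet_tailPositions
  rw [← h.card_tailValues] at hmem
  have hle : #(tailValues e k) ≤ n := by have := h.card_tailValues_lt; omega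
  have hsorted : (fun r => e (Fin.castLE hle r).rev) = (tailValues e k).orderEmbOfFin rfl := by
    have hpos : ∀ r, (Fin.castLE hle r).rev ∈ tailPositions e k := fun r => by
      simp [hmem]
    refine orderEmbOfFin_unique rfl (fun r => mem_image_of_mem e (hpos r)) fun r r' hrr' => ?_
    exact h.strictAntiOn_tailPositions (hpos r') (hpos r) (Fin.rev_lt_rev.2 hrr')
  funext i
  rcases le_or_gt (i : ℕ) k with hi | hi
  · rw [peakedSeq_of_le hi, h.eq_self i hi]
  rcases lt_or_ge (i.rev : ℕ) #(tailValues e k) with hr | hr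
  · rw [peakedSeq_of_rev_lt hi hr, ← hsorted]
    exact congrArg e (Fin.ext (by simp only [Fin.val_rev, Fin.val_castLE]; omega))
  · have hi' : i ∉ tailPositions e k := fun hi' => hr.not_gt ((hmem i).1 hi')
    simp only [tailPositions, mem_filter, mem_univ, true_and, not_and, not_lt] at hi'
    rw [peakedSeq_of_card_le hi hr]
    exact le_antisymm (h.le i) (hi' hi)

end IsPeakedAt

end Peaked

theorem mapsTo_peakedSeq (n : ℕ) :
    Set.MapsTo (fun p : Σ _ : ℕ, Finset ℕ => peakedSeq n p.1 p.2) (peakParams n)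
      {e | InvSeq e ∧ Avoids e [0,0,1] ∧ Avoids e [1,0,0]} := fun ⟨_, _⟩ hp => by
  obtain ⟨hk, hD, -⟩ := mem_peakParams.1 hp
  have h := isPeakedAt_peakedSeq hk hD
  exact ⟨h.invSeq, h.avoids_001, h.avoids_100⟩

theorem injOn_peakedSeq (n : ℕ) :
    Set.InjOn (fun p : Σ _ : ℕ, Finset ℕ => peakedSeq n p.1 p.2) (peakParams n) := by
  rintro ⟨k, D⟩ hp ⟨k', D'⟩ hp' (heq : peakedSeq n k D = peakedSeq n k' D')
  obtain ⟨hk, hD, hDn⟩ := mem_peakParams.1 hp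
  obtain ⟨hk', hD', hDn'⟩ := mem_peakParams.1 hp'
  obtain rfl := (isPeakedAt_peakedSeq hk hD).peak_unique (heq ▸ isPeakedAt_peakedSeq hk' hD')
  rw [← tailValues_peakedSeq hD hDn, ← tailValues_peakedSeq hD' hDn', heq]

theorem surjOn_peakedSeq {n : ℕ} (hn : 1 ≤ n) :
    Set.SurjOn (fun p : Σ _ : ℕ, Finset ℕ => peakedSeq n p.1 p.2) (peakParams n)
      {e | InvSeq e ∧ Avoids e [0,0,1] ∧ Avoids e [1,0,0]} := by
  rintro e ⟨hinv, h001, h100⟩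
  obtain ⟨k, hk, hmax⟩ := exists_last_saturated hn hinv
  have h := isPeakedAt_of_avoids hinv h001 h100 hk hmax
  exact ⟨⟨k, tailValues e k⟩,
    mem_peakParams.2 ⟨h.lt, tailValues_subset_range e k, h.card_tailValues_lt⟩,
    h.eq_peakedSeq.symm⟩

theorem stmt_19 (n : ℕ) (hn : 1 ≤ n) :
    Nat.card {e : Fin n → ℕ // InvSeq e ∧ Avoids e [0,0,1] ∧ Avoids e [1,0,0]}
      = Nat.fib (n + 2) - 1 := by
  have hbij := Set.BijOn.mk (mapsTo_peakedSeq n) (injOn_peakedSeq n) (surjOn_peakedSeq hn)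
  rw [← card_peakParams, ← Set.ncard_coe_finset, hbij.ncard_eq]
  rfl
end
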